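/- arXiv:1507.02398 — 2 statements merged into one kernel-verified Lean document; each statement's English description precedes it below -/
import Mathlib

section
/- Fix a cube Q_0 ⊂ ℝ^n and let F ∈ L^1(Q_0) be nonnegative. Assume there are constants Θ ≥ 1 and 0 ≤ δ < 1/2 such that for every Q ∈ D(Q_0)\{Q_0} there exist nonnegative measurable functions H^Q, G^Q and a constant g^Q ≥ 0 satisfying: (i) F ≤ G^Q + H^Q a.e. on Q; (ii) ‖H^Q‖_{L^∞(Q)} ≤ Θ · (average of F over Q̂); (iii) (average of G^Q over Q) ≤ δ · (average of F over Q̂) + g^Q. Define G*_{Q_0}(x) = sup{ g^Q : Q ∈ D(Q_0), x ∈ Q }. Then for every p with 1 < p < 1 + log(1/(2δ))/log(2Θ) (any p > 1 if δ = 0) there is a constant C depending only on p, Θ, δ such that ‖F‖_{L^{p,∞},Q_0} ≤ ‖M_{Q_0}F‖_{L^{p,∞},Q_0} ≤ C‖G*_{Q_0}‖_{L^{p,∞},Q_0} + C · (average of F over Q_0). -/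
open MeasureTheory Filter
open scoped ENNReal NNReal Topology

structure Cube (n : ℕ) where
  corner : Fin n → ℝ
  side : ℝ
  side_pos : 0 < side

namespace Cube

variable {n : ℕ}

/-- The (half-open) cube determined by the data. -/
def set (Q : Cube n) : Set (Fin n → ℝ) :=
  {x | ∀ i, Q.corner i ≤ x i ∧ x i < Q.corner i + Q.side}

/-- The dyadic subcube of `Q` of generation `k` in position `m`. -/
noncomputable def dyadic (Q : Cube n) (k : ℕ) (m : Fin n → ℕ) : Cube n :=
  ⟨fun i => Q.corner i + Q.side / 2 ^ k * (m i : ℝ), Q.side / 2 ^ k,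
    div_pos Q.side_pos (by positivity)⟩

/-- `Q` belongs to the family `𝒟(Q₀)` of dyadic subcubes of `Q₀`. -/
def IsDyadicSub (Q₀ Q : Cube n) : Prop :=
  ∃ (k : ℕ) (m : Fin n → ℕ), (∀ i, m i < 2 ^ k) ∧ Q = Q₀.dyadic k m

/-- The average `(1/|Q|)∫_Q f dx` (of a nonnegative function), with values in `ℝ≥0∞`. -/
noncomputable def avg (Q : Cube n) (f : (Fin n → ℝ) → ℝ) : ℝ≥0∞ :=
  (∫⁻ x in Q.set, ENNReal.ofReal (f x)) / volume Q.set

/-- The (real-valued) average `f_Q = (1/|Q|)∫_Q f dx`. -/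
noncomputable def ravg (Q : Cube n) (f : (Fin n → ℝ) → ℝ) : ℝ :=
  ⨍ x in Q.set, f x

/-- The local dyadic maximal function `M_{Q₀} f`. -/
noncomputable def maximal (Q₀ : Cube n) (f : (Fin n → ℝ) → ℝ) (x : Fin n → ℝ) : ℝ≥0∞ :=
  ⨆ (k : ℕ) (m : Fin n → ℕ) (_ : (∀ i, m i < 2 ^ k) ∧ x ∈ (Q₀.dyadic k m).set),
    avg (Q₀.dyadic k m) f

/-- `G*_{Q₀}(x) = sup { g(Q) : Q ∈ 𝒟(Q₀), x ∈ Q }`. -/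
noncomputable def gstar (Q₀ : Cube n) (g : Cube n → ℝ) (x : Fin n → ℝ) : ℝ≥0∞ :=
  ⨆ (k : ℕ) (m : Fin n → ℕ) (_ : (∀ i, m i < 2 ^ k) ∧ x ∈ (Q₀.dyadic k m).set),
    ENNReal.ofReal (g (Q₀.dyadic k m))

/-- The local dyadic sharp maximal function `M^#_{Q₀} f`. -/
noncomputable def sharpMaximal (Q₀ : Cube n) (f : (Fin n → ℝ) → ℝ) (x : Fin n → ℝ) : ℝ≥0∞ :=
  ⨆ (k : ℕ) (m : Fin n → ℕ) (_ : (∀ i, m i < 2 ^ k) ∧ x ∈ (Q₀.dyadic k m).set),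
    avg (Q₀.dyadic k m) (fun y => |f y - ravg (Q₀.dyadic k m) f|)

/-- The normalized weak `L^p` (quasi-)norm on a cube, for an `ℝ≥0∞`-valued function. -/
noncomputable def wnorm (Q : Cube n) (p : ℝ) (f : (Fin n → ℝ) → ℝ≥0∞) : ℝ≥0∞ :=
  ⨆ (t : ℝ) (_ : 0 < t),
    ENNReal.ofReal t * (volume {x ∈ Q.set | ENNReal.ofReal t < f x} / volume Q.set) ^ (1 / p)

/-- The normalized `L^p` norm `((1/|Q|)∫_Q f^p dx)^{1/p}` for an `ℝ≥0∞`-valued function. -/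
noncomputable def lpnorm (Q : Cube n) (p : ℝ) (f : (Fin n → ℝ) → ℝ≥0∞) : ℝ≥0∞ :=
  ((∫⁻ x in Q.set, f x ^ p) / volume Q.set) ^ (1 / p)

/-- The dyadic John–Nirenberg functional `‖f‖_{JN_p^{dyadic},Q}`. -/
noncomputable def jnNorm (Q : Cube n) (p : ℝ) (f : (Fin n → ℝ) → ℝ) : ℝ≥0∞ :=
  ⨆ (𝒮 : Set (Cube n)) (_ : (∀ R ∈ 𝒮, Q.IsDyadicSub R) ∧ 𝒮.PairwiseDisjoint Cube.set),
    ((∑' R : 𝒮, avg (R : Cube n) (fun x => |f x - ravg (R : Cube n) f|) ^ p *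
        volume (R : Cube n).set) / volume Q.set) ^ (1 / p)

/-- `sup ((1/|Q|) Σ_i a(Q_i)^p |Q_i|)^{1/p}` over pairwise disjoint families in `𝒟(Q)`. -/
noncomputable def dpSup (Q : Cube n) (p : ℝ) (a : Cube n → ℝ) : ℝ≥0∞ :=
  ⨆ (𝒮 : Set (Cube n)) (_ : (∀ R ∈ 𝒮, Q.IsDyadicSub R) ∧ 𝒮.PairwiseDisjoint Cube.set),
    ((∑' R : 𝒮, ENNReal.ofReal (a (R : Cube n)) ^ p * volume (R : Cube n).set) /
      volume Q.set) ^ (1 / p)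

/-- `‖a‖_{D_p,Q}`. -/
noncomputable def dpNorm (Q : Cube n) (p : ℝ) (a : Cube n → ℝ) : ℝ≥0∞ :=
  dpSup Q p a / ENNReal.ofReal (a Q)

/-- `‖a‖_{D_p^{dyadic}(Q₀)}`. -/
noncomputable def dpGlobal (Q₀ : Cube n) (p : ℝ) (a : Cube n → ℝ) : ℝ≥0∞ :=
  ⨆ (Q : Cube n) (_ : Q₀.IsDyadicSub Q), dpNorm Q p a

end Cube

/-!
Stop the dyadic cubes of `Q₀` at the maximal ones on which the average of `F` exceeds `t`.
Since the average over `Q₀` is at most `t`, each stopping cube `S` is proper and its parent has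
average at most `t`, so `F ≤ G^S + Θ t` on `S`. Where `M F > 2Θt` inside `S`, either `g(S) > γt`
and `G* > γt` on all of `S`, or the local maximal function of `G^S` exceeds `Θt` there, which by
the dyadic weak `(1,1)` inequality and (iii) happens on a portion `(δ + γ)/Θ` of `S` at most.
This good-`λ` inequality, multiplied by `(2Θt)^p`, bounds `t^p |{M F > t}|` by a contraction
`(2Θ)^p (δ + γ)/Θ < 1` of its value at `t/2Θ` plus `C (‖G*‖ + F_{Q₀})^p |Q₀|`; a supremum over a
bounded range of `t` (finite since `|{M F > t}| ≤ |Q₀|`) absorbs the contraction. The inequality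
`F ≤ M F` is Lebesgue's differentiation theorem along the dyadic cubes.
-/

theorem MeasureTheory.measure_le_mul_biUnion_add {ι α : Type*} [MeasurableSpace α]
    {μ : Measure α} {𝒮 : Set ι} {s : ι → Set α} (hc : 𝒮.Countable) (hd : 𝒮.PairwiseDisjoint s)
    (hm : ∀ i ∈ 𝒮, MeasurableSet (s i)) {X Y : Set α} {c : ℝ≥0∞} (hX : X ⊆ ⋃ i ∈ 𝒮, s i)
    (h : ∀ i ∈ 𝒮, μ (X ∩ s i) ≤ c * μ (s i) + μ (Y ∩ s i)) :
    μ X ≤ c * μ (⋃ i ∈ 𝒮, s i) + μ Y :=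
  calc μ X ≤ μ (⋃ i ∈ 𝒮, X ∩ s i) := measure_mono <| by
        rw [← Set.inter_iUnion₂]; exact Set.subset_inter le_rfl hX
    _ ≤ ∑' i : 𝒮, μ (X ∩ s i) := measure_biUnion_le μ hc _
    _ ≤ ∑' i : 𝒮, (c * μ (s i) + μ.restrict Y (s i)) := ENNReal.tsum_le_tsum fun i => by
        rw [Measure.restrict_apply (hm i i.2), Set.inter_comm _ Y]; exact h i i.2
    _ = c * μ (⋃ i ∈ 𝒮, s i) + μ.restrict Y (⋃ i ∈ 𝒮, s i) := by
        rw [ENNReal.tsum_add, ENNReal.tsum_mul_left, measure_biUnion hc hd hm,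
          measure_biUnion hc hd hm]
    _ ≤ c * μ (⋃ i ∈ 𝒮, s i) + μ Y :=
        add_le_add le_rfl
          ((measure_mono (Set.subset_univ _)).trans_eq (Measure.restrict_apply_univ Y))

theorem ENNReal.le_div_one_sub_of_forall_le_mul_add {φ : ℝ → ℝ≥0∞} {a : ℝ} {e K : ℝ≥0∞}
    (ha : 1 ≤ a) (he : e < 1) (hbdd : ∀ T, ⨆ t ∈ Set.Ioc 0 T, φ t ≠ ⊤)
    (h : ∀ t > 0, φ t ≤ e * φ (t / a) + K) {t : ℝ} (ht : 0 < t) :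
    φ t ≤ K / (1 - e) := by
  set S := ⨆ s ∈ Set.Ioc 0 t, φ s
  have hS : S ≤ e * S + K := iSup₂_le fun s hs => (h s hs.1).trans <| by
    gcongr
    exact le_iSup₂_of_le (s / a) ⟨div_pos hs.1 (by linarith), (div_le_self hs.1.le ha).trans hs.2⟩
      le_rfl
  have hS' : S ≤ K / (1 - e) := by
    rw [ENNReal.le_div_iff_mul_le (Or.inl (tsub_pos_of_lt he).ne')
      (Or.inl (ne_top_of_le_ne_top ENNReal.one_ne_top tsub_le_self)),
      ENNReal.mul_sub fun _ _ => hbdd t, mul_one, tsub_le_iff_right]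
    exact hS.trans_eq (by rw [add_comm, mul_comm])
  exact (le_iSup₂_of_le t ⟨ht, le_rfl⟩ le_rfl).trans hS'

theorem exists_pos_le_one_rpow_mul_lt_one {Θ δ p : ℝ} (hΘ : 1 ≤ Θ) (hδ : 0 ≤ δ)
    (hp : δ = 0 ∨ p < 1 + Real.log (1 / (2 * δ)) / Real.log (2 * Θ)) :
    ∃ γ, 0 < γ ∧ γ ≤ 1 ∧ (2 * Θ) ^ p * ((δ + γ) / Θ) < 1 := by
  have h0 : (2 * Θ) ^ p * ((δ + 0) / Θ) < 1 := by
    rcases hδ.eq_or_lt with rfl | hδpos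
    · simp
    have hL : 0 < Real.log (2 * Θ) := Real.log_pos (by linarith)
    have h1 : (p - 1) * Real.log (2 * Θ) < Real.log (1 / (2 * δ)) := by
      rw [← lt_div_iff₀ hL]
      linarith [hp.resolve_left hδpos.ne']
    have h2 : (2 * Θ) ^ (p - 1) < 1 / (2 * δ) := by
      rw [Real.rpow_def_of_pos (by linarith), ← Real.lt_log_iff_exp_lt (by positivity)]
      linarith
    calc (2 * Θ) ^ p * ((δ + 0) / Θ) = 2 * δ * (2 * Θ) ^ (p - 1) := by
          rw [add_zero, Real.rpow_sub (by linarith), Real.rpow_one]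
          field_simp
      _ < 2 * δ * (1 / (2 * δ)) := by gcongr
      _ = 1 := by field_simp
  have hcont : Tendsto (fun γ => (2 * Θ) ^ p * ((δ + γ) / Θ)) (𝓝[>] 0)
      (𝓝 ((2 * Θ) ^ p * ((δ + 0) / Θ))) :=
    ((continuous_const.mul ((continuous_const.add continuous_id).div_const Θ)).tendsto
      0).mono_left nhdsWithin_le_nhds
  obtain ⟨γ, hγ, hγ1⟩ :=
    ((hcont.eventually (gt_mem_nhds h0)).and (Ioc_mem_nhdsGT one_pos)).exists
  exact ⟨γ, hγ1.1, hγ1.2, hγ⟩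

namespace Cube

variable {n : ℕ}

theorem set_eq_pi (Q : Cube n) :
    Q.set = Set.univ.pi fun i => Set.Ico (Q.corner i) (Q.corner i + Q.side) := by
  ext x; simp [Cube.set, Set.mem_pi]

theorem measurableSet_set (Q : Cube n) : MeasurableSet Q.set := by
  rw [set_eq_pi]; exact .univ_pi fun _ => measurableSet_Ico

theorem volume_set (Q : Cube n) : volume Q.set = ENNReal.ofReal Q.side ^ n := by
  simp [set_eq_pi, volume_pi_pi, Real.volume_Ico]

theorem volume_set_ne_zero (Q : Cube n) : volume Q.set ≠ 0 := by
  simp [volume_set, Q.side_pos]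

theorem volume_set_ne_top (Q : Cube n) : volume Q.set ≠ ⊤ := by
  simp [volume_set]

theorem corner_mem_set (Q : Cube n) : Q.corner ∈ Q.set :=
  fun _ => ⟨le_rfl, lt_add_of_pos_right _ Q.side_pos⟩

noncomputable def center (R : Cube n) : Fin n → ℝ := fun i => R.corner i + R.side / 2

theorem closedBall_center (R : Cube n) :
    Metric.closedBall R.center (R.side / 2) =
      Set.univ.pi fun i => Set.Icc (R.corner i) (R.corner i + R.side) := by
  rw [closedBall_pi _ (by linarith [R.side_pos])]
  refine Set.pi_congr rfl fun i _ => ?_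
  rw [Real.closedBall_eq_Icc, center]
  congr 1 <;> ring

theorem set_subset_closedBall (R : Cube n) :
    R.set ⊆ Metric.closedBall R.center (R.side / 2) := by
  rw [closedBall_center, set_eq_pi]
  exact Set.pi_mono fun _ _ => Set.Ico_subset_Icc_self

theorem closedBall_center_ae_eq (R : Cube n) :
    Metric.closedBall R.center (R.side / 2) =ᵐ[volume] R.set := by
  rw [closedBall_center, set_eq_pi]
  exact Measure.pi_Ico_ae_eq_pi_Icc.symm

section Averages

variable {Q : Cube n} {f : (Fin n → ℝ) → ℝ} {l : ℝ≥0∞}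

theorem avg_le_iff : Q.avg f ≤ l ↔ ∫⁻ x in Q.set, ENNReal.ofReal (f x) ≤ l * volume Q.set :=
  ENNReal.div_le_iff Q.volume_set_ne_zero Q.volume_set_ne_top

theorem lt_avg_iff : l < Q.avg f ↔ l * volume Q.set < ∫⁻ x in Q.set, ENNReal.ofReal (f x) :=
  lt_iff_lt_of_le_iff_le avg_le_iff

theorem avg_mul_volume (Q : Cube n) (f : (Fin n → ℝ) → ℝ) :
    Q.avg f * volume Q.set = ∫⁻ x in Q.set, ENNReal.ofReal (f x) :=
  ENNReal.div_mul_cancel Q.volume_set_ne_zero Q.volume_set_ne_top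

theorem avg_eq_ofReal_setAverage (hf0 : ∀ x, 0 ≤ f x) (hf : IntegrableOn f Q.set) :
    Q.avg f = ENNReal.ofReal (⨍ x in Q.set, f x) :=
  (ofReal_setAverage hf (Eventually.of_forall hf0)).symm

theorem avg_le_avg_add {R : Cube n} {P : Set (Fin n → ℝ)} {F G H : (Fin n → ℝ) → ℝ} {c : ℝ≥0∞}
    (hG : Measurable G) (hRP : R.set ⊆ P) (hle : ∀ᵐ x ∂volume.restrict P, F x ≤ G x + H x)
    (hH : eLpNorm H ⊤ (volume.restrict P) ≤ c) :
    R.avg F ≤ R.avg G + c := by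
  have hHc : ∀ᵐ x ∂volume.restrict R.set, ENNReal.ofReal (H x) ≤ c := by
    rw [eLpNorm_exponent_top] at hH
    refine ae_restrict_of_ae_restrict_of_subset hRP ?_
    filter_upwards [ae_le_eLpNormEssSup (f := H)] with x hx
    exact (Real.ofReal_le_enorm _).trans (hx.trans hH)
  rw [avg_le_iff, add_mul, avg_mul_volume]
  calc ∫⁻ x in R.set, ENNReal.ofReal (F x)
      ≤ ∫⁻ x in R.set, (ENNReal.ofReal (G x) + ENNReal.ofReal (H x)) := by
        refine lintegral_mono_ae ?_
        filter_upwards [ae_restrict_of_ae_restrict_of_subset hRP hle] with x hx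
        exact (ENNReal.ofReal_le_ofReal hx).trans ENNReal.ofReal_add_le
    _ = (∫⁻ x in R.set, ENNReal.ofReal (G x)) + ∫⁻ x in R.set, ENNReal.ofReal (H x) := by
        rw [lintegral_add_left hG.ennreal_ofReal]
    _ ≤ (∫⁻ x in R.set, ENNReal.ofReal (G x)) + c * volume R.set := by
        grw [lintegral_mono_ae hHc, setLIntegral_const]

end Averages

section DyadicChain

/-- The position of the generation-`k` dyadic subcube of `Q` containing `x`, when `x ∈ Q.set`. -/
noncomputable def idx (Q : Cube n) (k : ℕ) (x : Fin n → ℝ) (i : Fin n) : ℕ :=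
  ⌊(x i - Q.corner i) / (Q.side / 2 ^ k)⌋₊

noncomputable def cubeAt (Q : Cube n) (k : ℕ) (x : Fin n → ℝ) : Cube n :=
  Q.dyadic k (Q.idx k x)

variable {Q : Cube n} {k j : ℕ} {m : Fin n → ℕ} {x y : Fin n → ℝ}

theorem mem_dyadic_iff :
    x ∈ (Q.dyadic k m).set ↔ ∀ i, Q.corner i ≤ x i ∧ Q.idx k x i = m i := by
  have hh : 0 < Q.side / 2 ^ k := (Q.dyadic k m).side_pos
  refine forall_congr' fun i => ?_
  simp only [dyadic]
  constructor
  · rintro ⟨h1, h2⟩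
    have hc : Q.corner i ≤ x i :=
      le_trans (le_add_of_nonneg_right (by positivity)) h1
    refine ⟨hc, (Nat.floor_eq_iff (div_nonneg (sub_nonneg.2 hc) hh.le)).2 ⟨?_, ?_⟩⟩
    · rw [le_div_iff₀ hh]; linarith
    · rw [div_lt_iff₀ hh]; linarith
  · rintro ⟨hc, hm⟩
    rw [idx, Nat.floor_eq_iff (div_nonneg (sub_nonneg.2 hc) hh.le), le_div_iff₀ hh,
      div_lt_iff₀ hh] at hm
    constructor <;> linarith [hm.1, hm.2]

theorem idx_add_div (Q : Cube n) (k e : ℕ) (x : Fin n → ℝ) (i : Fin n) :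
    Q.idx (k + e) x i / 2 ^ e = Q.idx k x i := by
  rw [idx, idx, ← Nat.floor_div_natCast]
  congr 1
  have := Q.side_pos.ne'
  field_simp
  push_cast
  ring

theorem idx_div_pow (hj : j ≤ k) (i : Fin n) : Q.idx k x i / 2 ^ (k - j) = Q.idx j x i := by
  obtain ⟨e, rfl⟩ := Nat.exists_eq_add_of_le hj
  simpa using Q.idx_add_div j e x i

theorem idx_lt (hx : x ∈ Q.set) (i : Fin n) : Q.idx k x i < 2 ^ k := by
  have hh : 0 < Q.side / 2 ^ k := (Q.dyadic k 0).side_pos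
  rw [idx, Nat.floor_lt (div_nonneg (sub_nonneg.2 (hx i).1) hh.le), div_lt_iff₀ hh]
  have : (2 : ℝ) ^ k * (Q.side / 2 ^ k) = Q.side := by field_simp
  push_cast
  linarith [(hx i).2]

theorem mem_cubeAt (hx : x ∈ Q.set) : x ∈ (Q.cubeAt k x).set :=
  mem_dyadic_iff.2 fun i => ⟨(hx i).1, rfl⟩

theorem cubeAt_eq_of_mem (h : x ∈ (Q.dyadic k m).set) : Q.cubeAt k x = Q.dyadic k m :=
  congrArg (Q.dyadic k) (funext fun i => (mem_dyadic_iff.1 h i).2)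

theorem cubeAt_eq_of_mem_cubeAt (hy : y ∈ (Q.cubeAt k x).set) (hj : j ≤ k) :
    Q.cubeAt j y = Q.cubeAt j x := by
  refine congrArg (Q.dyadic j) (funext fun i => ?_)
  rw [← idx_div_pow hj, ← idx_div_pow hj, (mem_dyadic_iff.1 hy i).2]

theorem cubeAt_subset_cubeAt (hj : j ≤ k) : (Q.cubeAt k x).set ⊆ (Q.cubeAt j x).set := by
  intro y hy
  rw [← cubeAt_eq_of_mem_cubeAt hy hj]
  exact mem_dyadic_iff.2 fun i => ⟨(mem_dyadic_iff.1 hy i).1, rfl⟩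

theorem cubeAt_zero (hx : x ∈ Q.set) : Q.cubeAt 0 x = Q := by
  have : Q.idx 0 x = 0 := funext fun i => Nat.lt_one_iff.1 (by simpa using idx_lt (k := 0) hx i)
  rw [cubeAt, this]
  cases Q
  simp [dyadic]

theorem cubeAt_subset (hx : x ∈ Q.set) : (Q.cubeAt k x).set ⊆ Q.set := by
  simpa [cubeAt_zero hx] using cubeAt_subset_cubeAt (Nat.zero_le k) (Q := Q) (x := x)

theorem dyadic_idx_succ_div_two (Q : Cube n) (k : ℕ) (x : Fin n → ℝ) :
    Q.dyadic k (fun i => Q.idx (k + 1) x i / 2) = Q.cubeAt k x :=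
  congrArg (Q.dyadic k) (funext fun i => by simpa using Q.idx_add_div k 1 x i)

theorem maximal_eq_iSup (hx : x ∈ Q.set) (f : (Fin n → ℝ) → ℝ) :
    Q.maximal f x = ⨆ k, (Q.cubeAt k x).avg f := by
  refine le_antisymm (iSup_le fun k => iSup₂_le fun m hm => ?_)
    (iSup_le fun k => le_iSup_of_le k <| le_iSup_of_le (Q.idx k x) <|
      le_iSup_of_le ⟨idx_lt hx, mem_cubeAt hx⟩ le_rfl)
  rw [← cubeAt_eq_of_mem hm.2]
  exact le_iSup_of_le k le_rfl

theorem ofReal_le_gstar (hx : x ∈ Q.set) (g : Cube n → ℝ) (k : ℕ) :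
    ENNReal.ofReal (g (Q.cubeAt k x)) ≤ Q.gstar g x :=
  le_iSup_of_le k <| le_iSup_of_le (Q.idx k x) <|
    le_iSup_of_le ⟨idx_lt hx, mem_cubeAt hx⟩ le_rfl

/-- Lebesgue's differentiation theorem along the dyadic cubes shrinking to a point: these are
closed balls of the sup metric, up to null sets, so the differentiation theorem for doubling
measures applies. -/
theorem ae_ofReal_le_maximal {F : (Fin n → ℝ) → ℝ} (hF0 : ∀ x, 0 ≤ F x)
    (hF : IntegrableOn F Q.set) :
    ∀ᵐ x, x ∈ Q.set → ENNReal.ofReal (F x) ≤ Q.maximal F x := by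
  filter_upwards [IsUnifLocDoublingMeasure.ae_tendsto_average volume
    (hF.integrable_indicator Q.measurableSet_set).locallyIntegrable 1] with x hx hxQ
  have hside : Tendsto (fun k => (Q.cubeAt k x).side / 2) atTop (𝓝[>] 0) := by
    refine tendsto_nhdsWithin_iff.2 ⟨?_, Eventually.of_forall fun k => half_pos (side_pos _)⟩
    simpa [cubeAt, dyadic] using
      ((tendsto_pow_atTop_atTop_of_one_lt one_lt_two).const_div_atTop Q.side).div_const 2
  have hlim := hx (fun k => (Q.cubeAt k x).center) _ hside <| Eventually.of_forall fun k => by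
    simpa using set_subset_closedBall _ (mem_cubeAt hxQ (k := k))
  rw [Set.indicator_of_mem hxQ] at hlim
  refine le_of_tendsto' ((ENNReal.tendsto_ofReal hlim).congr fun k => ?_)
    fun k => maximal_eq_iSup hxQ F ▸ le_iSup (fun k => (Q.cubeAt k x).avg F) k
  rw [setAverage_congr (closedBall_center_ae_eq _), avg_eq_ofReal_setAverage hF0
      (hF.mono_set (cubeAt_subset hxQ)),
    setAverage_congr_fun (measurableSet_set _) (Eventually.of_forall fun y hy =>
      Set.indicator_of_mem (cubeAt_subset hxQ hy) F)]

end DyadicChain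

section Stopping

variable {Q : Cube n} {k₀ : ℕ} {x : Fin n → ℝ} {f : (Fin n → ℝ) → ℝ} {l : ℝ≥0∞}

/-- The maximal dyadic cubes of generation at least `k₀` inside `Q.cubeAt k₀ x` on which the
average of `f` exceeds `l`. -/
def stoppingCubes (Q : Cube n) (k₀ : ℕ) (x : Fin n → ℝ) (f : (Fin n → ℝ) → ℝ) (l : ℝ≥0∞) :
    Set (Cube n) :=
  {S | ∃ y ∈ (Q.cubeAt k₀ x).set, ∃ j, S = Q.cubeAt (k₀ + j) y ∧ l < S.avg f ∧
    ∀ i < j, (Q.cubeAt (k₀ + i) y).avg f ≤ l}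

theorem stoppingCubes_countable : (Q.stoppingCubes k₀ x f l).Countable :=
  (Set.countable_range fun p : ℕ × (Fin n → ℕ) => Q.dyadic p.1 p.2).mono <| by
    rintro _ ⟨y, -, j, rfl, -⟩
    exact ⟨(k₀ + j, Q.idx (k₀ + j) y), rfl⟩

theorem stoppingCubes_pairwiseDisjoint :
    (Q.stoppingCubes k₀ x f l).PairwiseDisjoint Cube.set := by
  have key : ∀ {y y' z : Fin n → ℝ} {j j' : ℕ}, j < j' → z ∈ (Q.cubeAt (k₀ + j) y).set →
      z ∈ (Q.cubeAt (k₀ + j') y').set → (∀ i < j', (Q.cubeAt (k₀ + i) y').avg f ≤ l) →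
      (Q.cubeAt (k₀ + j) y).avg f ≤ l := by
    intro y y' z j j' hjj hz hz' hmin'
    rw [← cubeAt_eq_of_mem_cubeAt hz le_rfl, cubeAt_eq_of_mem_cubeAt hz' (by omega)]
    exact hmin' j hjj
  rintro _ ⟨y, -, j, rfl, hS, hmin⟩ _ ⟨y', -, j', rfl, hS', hmin'⟩ hne
  refine Set.disjoint_left.2 fun z hz hz' => hne ?_
  rcases lt_trichotomy j j' with h | rfl | h
  · exact absurd (key h hz hz' hmin') (not_le.2 hS)
  · rw [← cubeAt_eq_of_mem_cubeAt hz le_rfl, cubeAt_eq_of_mem_cubeAt hz' le_rfl]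
  · exact absurd (key h hz' hz hmin) (not_le.2 hS')

theorem biUnion_stoppingCubes (hx : x ∈ Q.set) :
    ⋃ S ∈ Q.stoppingCubes k₀ x f l, S.set =
      {y ∈ (Q.cubeAt k₀ x).set | ∃ j, l < (Q.cubeAt (k₀ + j) y).avg f} := by
  classical
  ext z
  simp only [Set.mem_iUnion, Set.mem_sep_iff, exists_prop]
  constructor
  · rintro ⟨_, ⟨y, hy, j, rfl, hS, -⟩, hz⟩
    refine ⟨?_, j, by rwa [cubeAt_eq_of_mem_cubeAt hz le_rfl]⟩
    rw [← cubeAt_eq_of_mem_cubeAt hy le_rfl]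
    exact cubeAt_subset_cubeAt (Nat.le_add_right k₀ j) hz
  · rintro ⟨hz, hex⟩
    exact ⟨_, ⟨z, hz, Nat.find hex, rfl, Nat.find_spec hex,
      fun i hi => not_lt.1 (Nat.find_min hex hi)⟩, mem_cubeAt (cubeAt_subset hx hz)⟩

/-- The dyadic weak `(1,1)` inequality, for the maximal function over dyadic cubes of generation
at least `k₀` inside a cube of generation `k₀`. -/
theorem mul_volume_exists_lt_avg_le_lintegral (hx : x ∈ Q.set) :
    l * volume {y ∈ (Q.cubeAt k₀ x).set | ∃ j, l < (Q.cubeAt (k₀ + j) y).avg f} ≤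
      ∫⁻ y in (Q.cubeAt k₀ x).set, ENNReal.ofReal (f y) := by
  have hcount := stoppingCubes_countable (Q := Q) (k₀ := k₀) (x := x) (f := f) (l := l)
  have hdisj := stoppingCubes_pairwiseDisjoint (Q := Q) (k₀ := k₀) (x := x) (f := f) (l := l)
  have hmeas : ∀ S ∈ Q.stoppingCubes k₀ x f l, MeasurableSet S.set :=
    fun S _ => S.measurableSet_set
  rw [← biUnion_stoppingCubes hx, measure_biUnion hcount hdisj hmeas, ← ENNReal.tsum_mul_left]
  calc ∑' S : Q.stoppingCubes k₀ x f l, l * volume (S : Cube n).set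
      ≤ ∑' S : Q.stoppingCubes k₀ x f l, ∫⁻ y in (S : Cube n).set, ENNReal.ofReal (f y) := by
        refine ENNReal.tsum_le_tsum fun ⟨S, hS⟩ => ?_
        obtain ⟨y, -, j, rfl, hlt, -⟩ := hS
        exact (lt_avg_iff.1 hlt).le
    _ = ∫⁻ y in ⋃ S ∈ Q.stoppingCubes k₀ x f l, S.set, ENNReal.ofReal (f y) :=
        (lintegral_biUnion hcount hmeas hdisj _).symm
    _ ≤ ∫⁻ y in (Q.cubeAt k₀ x).set, ENNReal.ofReal (f y) :=
        lintegral_mono_set (biUnion_stoppingCubes hx ▸ Set.sep_subset _ _)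

theorem setOf_lt_maximal_eq_biUnion (Q : Cube n) (f : (Fin n → ℝ) → ℝ) (l : ℝ≥0∞) :
    {y ∈ Q.set | l < Q.maximal f y} = ⋃ S ∈ Q.stoppingCubes 0 Q.corner f l, S.set := by
  rw [biUnion_stoppingCubes Q.corner_mem_set, cubeAt_zero Q.corner_mem_set]
  refine Set.sep_ext_iff.2 fun y hy => ?_
  simp [maximal_eq_iSup hy, lt_iSup_iff]

end Stopping

section WeakNorm

variable {Q : Cube n} {p : ℝ}

theorem rpow_mul_volume_le_wnorm (hp : 0 < p) (f : (Fin n → ℝ) → ℝ≥0∞) {t : ℝ} (ht : 0 < t) :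
    ENNReal.ofReal t ^ p * volume {x ∈ Q.set | ENNReal.ofReal t < f x} ≤
      Q.wnorm p f ^ p * volume Q.set :=
  calc ENNReal.ofReal t ^ p * volume {x ∈ Q.set | ENNReal.ofReal t < f x}
      = (ENNReal.ofReal t * (volume {x ∈ Q.set | ENNReal.ofReal t < f x} / volume Q.set)
          ^ (1 / p)) ^ p * volume Q.set := by
        rw [ENNReal.mul_rpow_of_nonneg _ _ hp.le, ← ENNReal.rpow_mul, one_div_mul_cancel hp.ne',
          ENNReal.rpow_one, mul_assoc, ENNReal.div_mul_cancel Q.volume_set_ne_zero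
            Q.volume_set_ne_top]
    _ ≤ Q.wnorm p f ^ p * volume Q.set := by
        gcongr
        exact le_iSup₂_of_le (f := fun t (_ : 0 < t) => ENNReal.ofReal t *
          (volume {x ∈ Q.set | ENNReal.ofReal t < f x} / volume Q.set) ^ (1 / p)) t ht le_rfl

theorem wnorm_le_of_forall (hp : 0 < p) {f : (Fin n → ℝ) → ℝ≥0∞} {c : ℝ≥0∞}
    (h : ∀ t > 0, ENNReal.ofReal t ^ p * volume {x ∈ Q.set | ENNReal.ofReal t < f x} ≤
      c ^ p * volume Q.set) :
    Q.wnorm p f ≤ c :=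
  iSup₂_le fun t ht =>
    calc ENNReal.ofReal t * (volume {x ∈ Q.set | ENNReal.ofReal t < f x} / volume Q.set)
          ^ (1 / p)
        = (ENNReal.ofReal t ^ p * volume {x ∈ Q.set | ENNReal.ofReal t < f x} / volume Q.set)
          ^ (1 / p) := by
          rw [mul_div_assoc, ENNReal.mul_rpow_of_nonneg _ _ (by positivity), ← ENNReal.rpow_mul,
            mul_one_div_cancel hp.ne', ENNReal.rpow_one]
      _ ≤ (c ^ p * volume Q.set / volume Q.set) ^ (1 / p) := by
          gcongr (?_ / _) ^ _
          exact h t ht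
      _ = c := by
          rw [ENNReal.mul_div_cancel_right Q.volume_set_ne_zero Q.volume_set_ne_top,
            ← ENNReal.rpow_mul, mul_one_div_cancel hp.ne', ENNReal.rpow_one]

theorem wnorm_mono_ae (hp : 0 ≤ p) {f₁ f₂ : (Fin n → ℝ) → ℝ≥0∞}
    (h : ∀ᵐ x, x ∈ Q.set → f₁ x ≤ f₂ x) : Q.wnorm p f₁ ≤ Q.wnorm p f₂ :=
  iSup₂_mono fun t _ => by
    gcongr ENNReal.ofReal t * (?_ / _) ^ _
    exact measure_mono_ae (h.mono fun x hx ⟨hxQ, hlt⟩ => ⟨hxQ, hlt.trans_le (hx hxQ)⟩)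

end WeakNorm

/-- The hypotheses (i)–(iii) on `H^Q`, `G^Q`, `g^Q` for `Q ∈ 𝒟(Q₀) \ {Q₀}`. -/
structure GoodLambdaDecomposition (Q₀ : Cube n) (F : (Fin n → ℝ) → ℝ) (Θ δ : ℝ)
    (H G : Cube n → (Fin n → ℝ) → ℝ) (g : Cube n → ℝ) : Prop where
  le_add : ∀ (k : ℕ) (m : Fin n → ℕ), (∀ i, m i < 2 ^ (k + 1)) →
    ∀ᵐ x ∂(volume.restrict (Q₀.dyadic (k + 1) m).set),
      F x ≤ G (Q₀.dyadic (k + 1) m) x + H (Q₀.dyadic (k + 1) m) x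
  eLpNorm_le : ∀ (k : ℕ) (m : Fin n → ℕ), (∀ i, m i < 2 ^ (k + 1)) →
    eLpNorm (H (Q₀.dyadic (k + 1) m)) ⊤ (volume.restrict (Q₀.dyadic (k + 1) m).set)
      ≤ ENNReal.ofReal Θ * Cube.avg (Q₀.dyadic k (fun i => m i / 2)) F
  avg_le : ∀ (k : ℕ) (m : Fin n → ℕ), (∀ i, m i < 2 ^ (k + 1)) →
    Cube.avg (Q₀.dyadic (k + 1) m) (G (Q₀.dyadic (k + 1) m))
      ≤ ENNReal.ofReal δ * Cube.avg (Q₀.dyadic k (fun i => m i / 2)) F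
        + ENNReal.ofReal (g (Q₀.dyadic (k + 1) m))

namespace GoodLambdaDecomposition

variable {Q₀ : Cube n} {F : (Fin n → ℝ) → ℝ} {Θ δ γ t p : ℝ}
  {H G : Cube n → (Fin n → ℝ) → ℝ} {g : Cube n → ℝ} {k : ℕ} {y : Fin n → ℝ}

theorem le_add_cubeAt (D : GoodLambdaDecomposition Q₀ F Θ δ H G g) (hy : y ∈ Q₀.set) :
    ∀ᵐ x ∂(volume.restrict (Q₀.cubeAt (k + 1) y).set),
      F x ≤ G (Q₀.cubeAt (k + 1) y) x + H (Q₀.cubeAt (k + 1) y) x :=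
  D.le_add k _ fun _ => idx_lt hy _

theorem eLpNorm_le_cubeAt (D : GoodLambdaDecomposition Q₀ F Θ δ H G g) (hy : y ∈ Q₀.set) :
    eLpNorm (H (Q₀.cubeAt (k + 1) y)) ⊤ (volume.restrict (Q₀.cubeAt (k + 1) y).set)
      ≤ ENNReal.ofReal Θ * (Q₀.cubeAt k y).avg F := by
  rw [← dyadic_idx_succ_div_two Q₀ k y]
  exact D.eLpNorm_le k _ fun _ => idx_lt hy _

theorem avg_le_cubeAt (D : GoodLambdaDecomposition Q₀ F Θ δ H G g) (hy : y ∈ Q₀.set) :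
    (Q₀.cubeAt (k + 1) y).avg (G (Q₀.cubeAt (k + 1) y))
      ≤ ENNReal.ofReal δ * (Q₀.cubeAt k y).avg F + ENNReal.ofReal (g (Q₀.cubeAt (k + 1) y)) := by
  rw [← dyadic_idx_succ_div_two Q₀ k y]
  exact D.avg_le k _ fun _ => idx_lt hy _

/-- Inside a stopping cube `S = Q₀.cubeAt (k + 1) y`, whose parent has average at most `t`, the
bound `F ≤ G^S + Θ t` turns `M F > 2Θt` into a large average of `G^S` on a subcube of `S`. -/
theorem setOf_lt_maximal_inter_subset (D : GoodLambdaDecomposition Q₀ F Θ δ H G g)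
    (hG : ∀ Q, Measurable (G Q)) (hΘ : 1 ≤ Θ) (ht : 0 < t) (hy : y ∈ Q₀.set)
    (hanc : ∀ i ≤ k, (Q₀.cubeAt i y).avg F ≤ ENNReal.ofReal t) :
    {x ∈ Q₀.set | ENNReal.ofReal (2 * Θ * t) < Q₀.maximal F x} ∩ (Q₀.cubeAt (k + 1) y).set ⊆
      {x ∈ (Q₀.cubeAt (k + 1) y).set | ∃ j, ENNReal.ofReal (Θ * t) <
        (Q₀.cubeAt (k + 1 + j) x).avg (G (Q₀.cubeAt (k + 1) y))} := by
  have hΘt : 0 < Θ * t := by positivity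
  have hH : eLpNorm (H (Q₀.cubeAt (k + 1) y)) ⊤ (volume.restrict (Q₀.cubeAt (k + 1) y).set) ≤
      ENNReal.ofReal (Θ * t) := by
    grw [D.eLpNorm_le_cubeAt hy, hanc k le_rfl, ENNReal.ofReal_mul (by linarith)]
  rintro x ⟨⟨hxQ, hlt⟩, hxS⟩
  obtain ⟨i, hi⟩ := lt_iSup_iff.1 (maximal_eq_iSup hxQ F ▸ hlt)
  refine ⟨hxS, ?_⟩
  rcases le_or_gt i k with hik | hik
  · rw [cubeAt_eq_of_mem_cubeAt hxS (by omega)] at hi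
    exact absurd ((hanc i hik).trans (ENNReal.ofReal_le_ofReal (by nlinarith))) (not_le.2 hi)
  obtain ⟨j, rfl⟩ := Nat.exists_eq_add_of_le hik
  have hsub : (Q₀.cubeAt (k + 1 + j) x).set ⊆ (Q₀.cubeAt (k + 1) y).set := by
    rw [← cubeAt_eq_of_mem_cubeAt hxS le_rfl]
    exact cubeAt_subset_cubeAt (Nat.le_add_right _ _)
  refine ⟨j, ?_⟩
  rw [← ENNReal.add_lt_add_iff_right (ENNReal.ofReal_ne_top (r := Θ * t)),
    ← ENNReal.ofReal_add hΘt.le hΘt.le]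
  calc ENNReal.ofReal (Θ * t + Θ * t) = ENNReal.ofReal (2 * Θ * t) := by ring_nf
    _ < _ := hi
    _ ≤ _ := avg_le_avg_add (hG _) hsub (D.le_add_cubeAt hy) hH

/-- The good-`λ` estimate on one stopping cube `S`: either `g S > γ t` and `S` lies in the level
set of `G*`, or the weak `(1,1)` inequality for `G^S` applies. -/
theorem volume_inter_cubeAt_le (D : GoodLambdaDecomposition Q₀ F Θ δ H G g)
    (hG : ∀ Q, Measurable (G Q)) (hΘ : 1 ≤ Θ) (hδ : 0 ≤ δ) (hγ : 0 ≤ γ) (ht : 0 < t)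
    (hy : y ∈ Q₀.set) (hanc : ∀ i ≤ k, (Q₀.cubeAt i y).avg F ≤ ENNReal.ofReal t) :
    volume ({x ∈ Q₀.set | ENNReal.ofReal (2 * Θ * t) < Q₀.maximal F x} ∩
        (Q₀.cubeAt (k + 1) y).set)
      ≤ ENNReal.ofReal ((δ + γ) / Θ) * volume (Q₀.cubeAt (k + 1) y).set +
        volume ({x ∈ Q₀.set | ENNReal.ofReal (γ * t) < Q₀.gstar g x} ∩
          (Q₀.cubeAt (k + 1) y).set) := by
  set S := Q₀.cubeAt (k + 1) y
  have hΘt : 0 < Θ * t := by positivity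
  by_cases hg : g S ≤ γ * t
  · have hint : ∫⁻ x in S.set, ENNReal.ofReal (G S x) ≤
        ENNReal.ofReal (Θ * t) * (ENNReal.ofReal ((δ + γ) / Θ) * volume S.set) := by
      rw [← mul_assoc, ← ENNReal.ofReal_mul hΘt.le, ← avg_le_iff]
      grw [D.avg_le_cubeAt hy, hanc k le_rfl, hg, ← ENNReal.ofReal_mul hδ,
        ← ENNReal.ofReal_add (by positivity) (by positivity)]
      exact le_of_eq (congrArg _ (by field_simp))
    calc _ ≤ volume {x ∈ S.set | ∃ j, ENNReal.ofReal (Θ * t) <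
          (Q₀.cubeAt (k + 1 + j) x).avg (G S)} :=
          measure_mono (D.setOf_lt_maximal_inter_subset hG hΘ ht hy hanc)
      _ ≤ ENNReal.ofReal ((δ + γ) / Θ) * volume S.set := by
        rw [← ENNReal.mul_le_mul_iff_right (by simpa using hΘt) ENNReal.ofReal_ne_top]
        exact (mul_volume_exists_lt_avg_le_lintegral hy).trans hint
      _ ≤ _ := le_self_add
  · have hsub : S.set ⊆ {x ∈ Q₀.set | ENNReal.ofReal (γ * t) < Q₀.gstar g x} := by
      intro x hx
      refine ⟨cubeAt_subset hy hx,
        lt_of_lt_of_le ?_ (ofReal_le_gstar (cubeAt_subset hy hx) g (k + 1))⟩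
      rw [cubeAt_eq_of_mem_cubeAt hx le_rfl]
      exact (ENNReal.ofReal_lt_ofReal_iff_of_nonneg (by positivity)).2 (not_le.1 hg)
    rw [Set.inter_eq_right.2 hsub]
    exact (measure_mono Set.inter_subset_right).trans le_add_self

theorem volume_lt_maximal_le (D : GoodLambdaDecomposition Q₀ F Θ δ H G g)
    (hG : ∀ Q, Measurable (G Q)) (hΘ : 1 ≤ Θ) (hδ : 0 ≤ δ) (hγ : 0 ≤ γ) (ht : 0 < t)
    (hA : Q₀.avg F ≤ ENNReal.ofReal t) :
    volume {x ∈ Q₀.set | ENNReal.ofReal (2 * Θ * t) < Q₀.maximal F x}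
      ≤ ENNReal.ofReal ((δ + γ) / Θ) * volume {x ∈ Q₀.set | ENNReal.ofReal t < Q₀.maximal F x}
        + volume {x ∈ Q₀.set | ENNReal.ofReal (γ * t) < Q₀.gstar g x} := by
  rw [setOf_lt_maximal_eq_biUnion Q₀ F (ENNReal.ofReal t)]
  refine measure_le_mul_biUnion_add stoppingCubes_countable stoppingCubes_pairwiseDisjoint
    (fun S _ => S.measurableSet_set) ?_ ?_
  · rw [← setOf_lt_maximal_eq_biUnion]
    exact fun x hx => ⟨hx.1, lt_of_le_of_lt (ENNReal.ofReal_le_ofReal (by nlinarith)) hx.2⟩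
  · rintro _ ⟨y, hy, j, rfl, hS, hmin⟩
    rw [cubeAt_zero Q₀.corner_mem_set] at hy
    obtain _ | k := j
    · rw [zero_add, cubeAt_zero hy] at hS
      exact absurd hA (not_le.2 hS)
    · simp only [zero_add] at hmin ⊢
      exact D.volume_inter_cubeAt_le hG hΘ hδ hγ ht hy fun i hi => hmin i (Nat.lt_succ_of_le hi)

theorem rpow_mul_volume_lt_maximal_le_of_avg_le (D : GoodLambdaDecomposition Q₀ F Θ δ H G g)
    (hG : ∀ Q, Measurable (G Q)) (hΘ : 1 ≤ Θ) (hδ : 0 ≤ δ) (hγ : 0 < γ) (hp : 0 < p) {u : ℝ}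
    (hu : 0 < u) (hA : Q₀.avg F ≤ ENNReal.ofReal u) :
    ENNReal.ofReal (2 * Θ * u) ^ p *
        volume {x ∈ Q₀.set | ENNReal.ofReal (2 * Θ * u) < Q₀.maximal F x} ≤
      ENNReal.ofReal ((2 * Θ) ^ p * ((δ + γ) / Θ)) * (ENNReal.ofReal u ^ p *
          volume {x ∈ Q₀.set | ENNReal.ofReal u < Q₀.maximal F x}) +
        (ENNReal.ofReal (2 * Θ / γ) * Q₀.wnorm p (Q₀.gstar g)) ^ p * volume Q₀.set := by
  have h2Θ :
      ENNReal.ofReal (2 * Θ * u) ^ p = ENNReal.ofReal (2 * Θ) ^ p * ENNReal.ofReal u ^ p := by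
    rw [← ENNReal.mul_rpow_of_nonneg _ _ hp.le, ← ENNReal.ofReal_mul (by positivity)]
  have h2Θγ : ENNReal.ofReal (2 * Θ * u) ^ p =
      ENNReal.ofReal (2 * Θ / γ) ^ p * ENNReal.ofReal (γ * u) ^ p := by
    rw [← ENNReal.mul_rpow_of_nonneg _ _ hp.le, ← ENNReal.ofReal_mul (by positivity)]
    congr 2
    field_simp
  calc _ ≤ ENNReal.ofReal (2 * Θ * u) ^ p *
        (ENNReal.ofReal ((δ + γ) / Θ) * volume {x ∈ Q₀.set | ENNReal.ofReal u < Q₀.maximal F x} +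
          volume {x ∈ Q₀.set | ENNReal.ofReal (γ * u) < Q₀.gstar g x}) := by
        grw [D.volume_lt_maximal_le hG hΘ hδ hγ.le hu hA]
    _ = ENNReal.ofReal ((2 * Θ) ^ p * ((δ + γ) / Θ)) * (ENNReal.ofReal u ^ p *
          volume {x ∈ Q₀.set | ENNReal.ofReal u < Q₀.maximal F x}) +
        ENNReal.ofReal (2 * Θ / γ) ^ p * (ENNReal.ofReal (γ * u) ^ p *
          volume {x ∈ Q₀.set | ENNReal.ofReal (γ * u) < Q₀.gstar g x}) := by
        rw [mul_add]
        congr 1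
        · rw [h2Θ, ENNReal.ofReal_mul (p := (2 * Θ) ^ p) (by positivity),
            ← ENNReal.ofReal_rpow_of_pos (x := 2 * Θ) (by positivity)]
          ring
        · rw [h2Θγ]
          ring
    _ ≤ _ := by
        gcongr _ + ?_
        rw [ENNReal.mul_rpow_of_nonneg _ _ hp.le, mul_assoc]
        gcongr _ * ?_
        exact rpow_mul_volume_le_wnorm hp _ (by positivity)

theorem rpow_mul_volume_lt_maximal_le (D : GoodLambdaDecomposition Q₀ F Θ δ H G g)
    (hG : ∀ Q, Measurable (G Q)) (hΘ : 1 ≤ Θ) (hδ : 0 ≤ δ) (hγ : 0 < γ) (hγ1 : γ ≤ 1)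
    (hp : 0 < p) (ht : 0 < t) :
    ENNReal.ofReal t ^ p * volume {x ∈ Q₀.set | ENNReal.ofReal t < Q₀.maximal F x} ≤
      ENNReal.ofReal ((2 * Θ) ^ p * ((δ + γ) / Θ)) * (ENNReal.ofReal (t / (2 * Θ)) ^ p *
          volume {x ∈ Q₀.set | ENNReal.ofReal (t / (2 * Θ)) < Q₀.maximal F x}) +
        (ENNReal.ofReal (2 * Θ / γ) * (Q₀.wnorm p (Q₀.gstar g) + Q₀.avg F)) ^ p *
          volume Q₀.set := by
  have htu : 2 * Θ * (t / (2 * Θ)) = t := by field_simp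
  by_cases hA : Q₀.avg F ≤ ENNReal.ofReal (t / (2 * Θ))
  · have hgood := D.rpow_mul_volume_lt_maximal_le_of_avg_le hG hΘ hδ hγ hp (by positivity) hA
    rw [htu] at hgood
    refine hgood.trans ?_
    gcongr
    exact le_self_add
  · calc _ ≤ (ENNReal.ofReal (2 * Θ / γ) * (Q₀.wnorm p (Q₀.gstar g) + Q₀.avg F)) ^ p *
            volume Q₀.set := by
          gcongr
          · rw [← htu, ENNReal.ofReal_mul (by positivity)]
            gcongr
            · exact le_div_self (by positivity) hγ hγ1
            · exact (not_le.1 hA).le.trans le_add_self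
          · exact Set.sep_subset _ _
      _ ≤ _ := le_add_self

theorem wnorm_maximal_le (D : GoodLambdaDecomposition Q₀ F Θ δ H G g)
    (hG : ∀ Q, Measurable (G Q)) (hΘ : 1 ≤ Θ) (hδ : 0 ≤ δ) (hγ : 0 < γ) (hγ1 : γ ≤ 1)
    (hp : 0 < p) (he : (2 * Θ) ^ p * ((δ + γ) / Θ) < 1) :
    Q₀.wnorm p (Q₀.maximal F) ≤
      ENNReal.ofReal (2 * Θ / γ * (1 - (2 * Θ) ^ p * ((δ + γ) / Θ)) ^ (-1 / p)) *
        (Q₀.wnorm p (Q₀.gstar g) + Q₀.avg F) := by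
  set e := (2 * Θ) ^ p * ((δ + γ) / Θ)
  have hbdd : ∀ T, ⨆ s ∈ Set.Ioc 0 T, ENNReal.ofReal s ^ p *
      volume {x ∈ Q₀.set | ENNReal.ofReal s < Q₀.maximal F x} ≠ ⊤ := fun T =>
    ne_top_of_le_ne_top (b := ENNReal.ofReal T ^ p * volume Q₀.set)
      (ENNReal.mul_ne_top (ENNReal.rpow_ne_top_of_nonneg hp.le ENNReal.ofReal_ne_top)
        Q₀.volume_set_ne_top) <|
      iSup₂_le fun s hs => by gcongr; exacts [hs.2, Set.sep_subset _ _]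
  refine wnorm_le_of_forall hp fun t ht =>
    (ENNReal.le_div_one_sub_of_forall_le_mul_add (by linarith) (ENNReal.ofReal_lt_one.2 he)
      hbdd (fun s hs => D.rpow_mul_volume_lt_maximal_le hG hΘ hδ hγ hγ1 hp hs) ht).trans_eq ?_
  rw [ENNReal.ofReal_mul (p := 2 * Θ / γ) (by positivity),
    ← ENNReal.ofReal_rpow_of_pos (x := 1 - e) (sub_pos.2 he),
    ENNReal.ofReal_sub 1 (by positivity), ENNReal.ofReal_one]
  simp only [ENNReal.mul_rpow_of_nonneg _ _ hp.le]
  rw [← ENNReal.rpow_mul, div_mul_cancel₀ (-1) hp.ne', ENNReal.rpow_neg_one, div_eq_mul_inv]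
  ring

end GoodLambdaDecomposition

end Cube

theorem good_lambda_dyadic_weak_Lp_general (n : ℕ) (Q₀ : Cube n) (F : (Fin n → ℝ) → ℝ)
    (hFnonneg : ∀ x, 0 ≤ F x)
    (hFint : IntegrableOn F Q₀.set)
    (Θ δ : ℝ) (hΘ : 1 ≤ Θ) (hδ0 : 0 ≤ δ)
    (H G : Cube n → (Fin n → ℝ) → ℝ) (g : Cube n → ℝ)
    (hGmeas : ∀ Q, Measurable (G Q))
    (h1 : ∀ (k : ℕ) (m : Fin n → ℕ), (∀ i, m i < 2 ^ (k + 1)) →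
      ∀ᵐ x ∂(volume.restrict (Q₀.dyadic (k + 1) m).set),
        F x ≤ G (Q₀.dyadic (k + 1) m) x + H (Q₀.dyadic (k + 1) m) x)
    (h2 : ∀ (k : ℕ) (m : Fin n → ℕ), (∀ i, m i < 2 ^ (k + 1)) →
      eLpNorm (H (Q₀.dyadic (k + 1) m)) ⊤ (volume.restrict (Q₀.dyadic (k + 1) m).set)
        ≤ ENNReal.ofReal Θ * Cube.avg (Q₀.dyadic k (fun i => m i / 2)) F)
    (h3 : ∀ (k : ℕ) (m : Fin n → ℕ), (∀ i, m i < 2 ^ (k + 1)) →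
      Cube.avg (Q₀.dyadic (k + 1) m) (G (Q₀.dyadic (k + 1) m))
        ≤ ENNReal.ofReal δ * Cube.avg (Q₀.dyadic k (fun i => m i / 2)) F
          + ENNReal.ofReal (g (Q₀.dyadic (k + 1) m)))
    (p : ℝ) (hp : 1 < p)
    (hp' : δ = 0 ∨ p < 1 + Real.log (1 / (2 * δ)) / Real.log (2 * Θ)) :
    ∃ C : ℝ, 0 < C ∧
      Cube.wnorm Q₀ p (fun x => ENNReal.ofReal (F x))
        ≤ Cube.wnorm Q₀ p (Cube.maximal Q₀ F) ∧
      Cube.wnorm Q₀ p (Cube.maximal Q₀ F)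
        ≤ ENNReal.ofReal C * Cube.wnorm Q₀ p (Cube.gstar Q₀ g)
          + ENNReal.ofReal C * Cube.avg Q₀ F := by
  obtain ⟨γ, hγ, hγ1, he⟩ := exists_pos_le_one_rpow_mul_lt_one hΘ hδ0 hp'
  have D : Q₀.GoodLambdaDecomposition F Θ δ H G g := ⟨h1, h2, h3⟩
  refine ⟨2 * Θ / γ * (1 - (2 * Θ) ^ p * ((δ + γ) / Θ)) ^ (-1 / p),
    mul_pos (by positivity) (Real.rpow_pos_of_pos (sub_pos.2 he) _),
    Cube.wnorm_mono_ae (by linarith) (Cube.ae_ofReal_le_maximal hFnonneg hFint), ?_⟩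
  rw [← mul_add]
  exact D.wnorm_maximal_le hGmeas hΘ hδ0 hγ hγ1 (by linarith) he

/-- **Good-λ inequality: weak `L^p` estimate (dyadic case).** -/
theorem good_lambda_dyadic_weak_Lp (n : ℕ) (Q₀ : Cube n) (F : (Fin n → ℝ) → ℝ)
    (hFmeas : Measurable F) (hFnonneg : ∀ x, 0 ≤ F x)
    (hFint : IntegrableOn F Q₀.set)
    (Θ δ : ℝ) (hΘ : 1 ≤ Θ) (hδ0 : 0 ≤ δ) (hδ1 : δ < 1 / 2)
    (H G : Cube n → (Fin n → ℝ) → ℝ) (g : Cube n → ℝ)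
    (hHmeas : ∀ Q, Measurable (H Q)) (hGmeas : ∀ Q, Measurable (G Q))
    (hHnn : ∀ Q x, 0 ≤ H Q x) (hGnn : ∀ Q x, 0 ≤ G Q x) (hgnn : ∀ Q, 0 ≤ g Q)
    (h1 : ∀ (k : ℕ) (m : Fin n → ℕ), (∀ i, m i < 2 ^ (k + 1)) →
      ∀ᵐ x ∂(volume.restrict (Q₀.dyadic (k + 1) m).set),
        F x ≤ G (Q₀.dyadic (k + 1) m) x + H (Q₀.dyadic (k + 1) m) x)
    (h2 : ∀ (k : ℕ) (m : Fin n → ℕ), (∀ i, m i < 2 ^ (k + 1)) →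
      eLpNorm (H (Q₀.dyadic (k + 1) m)) ⊤ (volume.restrict (Q₀.dyadic (k + 1) m).set)
        ≤ ENNReal.ofReal Θ * Cube.avg (Q₀.dyadic k (fun i => m i / 2)) F)
    (h3 : ∀ (k : ℕ) (m : Fin n → ℕ), (∀ i, m i < 2 ^ (k + 1)) →
      Cube.avg (Q₀.dyadic (k + 1) m) (G (Q₀.dyadic (k + 1) m))
        ≤ ENNReal.ofReal δ * Cube.avg (Q₀.dyadic k (fun i => m i / 2)) F
          + ENNReal.ofReal (g (Q₀.dyadic (k + 1) m)))
    (p : ℝ) (hp : 1 < p)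
    (hp' : δ = 0 ∨ p < 1 + Real.log (1 / (2 * δ)) / Real.log (2 * Θ)) :
    ∃ C : ℝ, 0 < C ∧
      Cube.wnorm Q₀ p (fun x => ENNReal.ofReal (F x))
        ≤ Cube.wnorm Q₀ p (Cube.maximal Q₀ F) ∧
      Cube.wnorm Q₀ p (Cube.maximal Q₀ F)
        ≤ ENNReal.ofReal C * Cube.wnorm Q₀ p (Cube.gstar Q₀ g)
          + ENNReal.ofReal C * Cube.avg Q₀ F :=
  good_lambda_dyadic_weak_Lp_general n Q₀ F hFnonneg hFint Θ δ hΘ hδ0 H G g hGmeas h1 h2 h3 p hp hp'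
end

section
/- Let (X,d,μ) be a metric measure space with μ a Borel regular doubling measure, fix η > 0, a ball B_0 ⊂ X, the family 𝓑 = 𝓑_{B_0}, and let F ∈ L^1(B̂_0) be nonnegative. Assume there are constants Θ ≥ 1, 0 ≤ δ < 1/2 and τ ≥ 1 such that for every B ∈ 𝓑 there exist nonnegative measurable functions H^B, G^B and a constant g^B ≥ 0 satisfying: (i) F ≤ G^B + H^B μ-a.e. on B; (ii) ‖H^B‖_{L^∞(B)} ≤ Θ · (μ-average of F over τB); (iii) (μ-average of G^B over B) ≤ δ · (μ-average of F over τB) + g^B. Define G*_𝓑(x) = sup{ g^B : B ∈ 𝓑, x ∈ B } (zero if no B ∈ 𝓑 contains x). Then there are constants λ_0 = λ_0(τ,η,μ) and C_μ ≥ 1 (depending only on μ) such that for every λ ≥ λ_0·(μ-average of F over B̂_0), every K > max{Θ, c_μ·3^D} and every 0 < γ < 1, μ({x ∈ B̂_0 : M_𝓑F(x) > Kλ and G*_𝓑(x) ≤ γλ}) ≤ C_μ ((δ+γ)/(K−Θ)) μ({x ∈ B̂_0 : M_𝓑F(x) > λ}). -/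
open MeasureTheory Filter
open scoped ENNReal NNReal Topology

/-- A (metric) ball, which comes with a center and a positive finite radius. -/
structure MBall (X : Type*) where
  center : X
  radius : ℝ
  radius_pos : 0 < radius

namespace MBall

variable {X : Type*} [MetricSpace X] [MeasurableSpace X]

/-- The underlying set of the ball. -/
def set (B : MBall X) : Set X := Metric.ball B.center B.radius

/-- The `t`-dilate `tB` of the ball `B`. -/
def dilate (B : MBall X) (t : ℝ) (ht : 0 < t) : MBall X :=
  ⟨B.center, t * B.radius, mul_pos ht B.radius_pos⟩

/-- `B̂ := (1+η)B`. -/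
def hat (B : MBall X) (η : ℝ) (hη : 0 < η) : MBall X :=
  B.dilate (1 + η) (by linarith)

/-- The family `𝓑 = 𝓑_{B₀} = {B(x_B,r_B) : x_B ∈ B₀, r_B ≤ η r_{B₀}}`. -/
def fam (B₀ : MBall X) (η : ℝ) : Set (MBall X) :=
  {B | B.center ∈ Metric.ball B₀.center B₀.radius ∧ B.radius ≤ η * B₀.radius}

/-- The `μ`-average `(1/μ(B))∫_B f dμ` of a nonnegative function, valued in `ℝ≥0∞`. -/
noncomputable def avg (μ : Measure X) (B : MBall X) (f : X → ℝ) : ℝ≥0∞ :=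
  (∫⁻ x in B.set, ENNReal.ofReal (f x) ∂μ) / μ B.set

/-- The real-valued `μ`-average `f_B = (1/μ(B))∫_B f dμ`. -/
noncomputable def ravg (μ : Measure X) (B : MBall X) (f : X → ℝ) : ℝ :=
  ⨍ x in B.set, f x ∂μ

/-- The maximal operator `M_𝓑` with respect to the basis `𝓑 = 𝓑_{B₀}`
(zero where no ball of the family contains the point). -/
noncomputable def maximal (μ : Measure X) (B₀ : MBall X) (η : ℝ) (f : X → ℝ) (x : X) :
    ℝ≥0∞ :=
  ⨆ (B : MBall X) (_ : B ∈ fam B₀ η ∧ x ∈ B.set), avg μ B f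

/-- `G*_𝓑(x) = sup { g(B) : B ∈ 𝓑, x ∈ B }` (zero where no ball of the family contains
the point). -/
noncomputable def gstar (B₀ : MBall X) (η : ℝ) (g : MBall X → ℝ) (x : X) : ℝ≥0∞ :=
  ⨆ (B : MBall X) (_ : B ∈ fam B₀ η ∧ x ∈ B.set), ENNReal.ofReal (g B)

/-- The normalized weak `L^p` (quasi-)norm on a ball, for an `ℝ≥0∞`-valued function. -/
noncomputable def wnorm (μ : Measure X) (B : MBall X) (p : ℝ) (f : X → ℝ≥0∞) : ℝ≥0∞ :=
  ⨆ (t : ℝ) (_ : 0 < t),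
    ENNReal.ofReal t * (μ {x ∈ B.set | ENNReal.ofReal t < f x} / μ B.set) ^ (1 / p)

/-- The normalized `L^p` norm `((1/μ(B))∫_B f^p dμ)^{1/p}` for an `ℝ≥0∞`-valued function. -/
noncomputable def lpnorm (μ : Measure X) (B : MBall X) (p : ℝ) (f : X → ℝ≥0∞) : ℝ≥0∞ :=
  ((∫⁻ x in B.set, f x ^ p ∂μ) / μ B.set) ^ (1 / p)

/-- `inf_{c ∈ ℝ} (1/μ(B)) ∫_B |f-c|^ρ dμ`. -/
noncomputable def oscInf (μ : Measure X) (ρ : ℝ) (B : MBall X) (f : X → ℝ) : ℝ≥0∞ :=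
  ⨅ c : ℝ, (∫⁻ x in B.set, ENNReal.ofReal (|f x - c| ^ ρ) ∂μ) / μ B.set

/-- The John–Nirenberg functional `‖f‖_{JN^ρ_{p,τ},B}`: the supremum over all families of
balls `{B_i}` with `{τ B_i}` pairwise disjoint and `τ B_i ⊆ B` of
`((1/μ(B)) Σ_i (inf_c ⨍_{B_i} |f-c|^ρ dμ)^{p/ρ} μ(τ B_i))^{1/p}`. -/
noncomputable def jnNorm (μ : Measure X) (p ρ τ : ℝ) (hτ : 0 < τ) (B : MBall X)
    (f : X → ℝ) : ℝ≥0∞ :=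
  ⨆ (I : Set (MBall X)) (_ : (∀ Bi ∈ I, (MBall.dilate Bi τ hτ).set ⊆ B.set) ∧
      I.PairwiseDisjoint (fun Bi => (MBall.dilate Bi τ hτ).set)),
    ((∑' Bi : I, oscInf μ ρ (Bi : MBall X) f ^ (p / ρ) *
        μ ((MBall.dilate (Bi : MBall X) τ hτ).set)) / μ B.set) ^ (1 / p)

/-- `‖a‖_{D_p,B}` for an (extended) nonnegative functional `a` on balls. -/
noncomputable def dpNorm (μ : Measure X) (p : ℝ) (B : MBall X) (a : MBall X → ℝ≥0∞) :
    ℝ≥0∞ :=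
  (⨆ (I : Set (MBall X)) (_ : (∀ Bi ∈ I, (Bi : MBall X).set ⊆ B.set) ∧
      I.PairwiseDisjoint MBall.set),
    ((∑' Bi : I, a (Bi : MBall X) ^ p * μ (Bi : MBall X).set) / μ B.set) ^ (1 / p)) / a B

/-- `‖a‖_{D_p(B₀)} = sup_{B ⊆ B₀} ‖a‖_{D_p,B}`. -/
noncomputable def dpGlobal (μ : Measure X) (p : ℝ) (B₀ : MBall X) (a : MBall X → ℝ≥0∞) :
    ℝ≥0∞ :=
  ⨆ (B : MBall X) (_ : B.set ⊆ B₀.set), dpNorm μ p B a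

end MBall

/-!
Stopping balls. By doubling, a ball of `𝓑` on which the average of `F` exceeds
`λ ≥ λ₀ ⨍_{B̂₀} F` is smaller than `B̂₀` by a factor `13τ(1+η)/η`. At a point where
`M_𝓑 F > Kλ` choose a ball `b` of almost maximal radius among those with average above `λ`: the
balls of `𝓑` through that point which are more than twice as large, in particular `13τ b`, have
average at most `λ`. So on `13 b` the hypotheses give `‖H‖_∞ ≤ Θλ` and `⨍ G ≤ (δ + γ)λ` (if
`G*_𝓑 ≤ γλ` at the point), while every ball with average above `Kλ` through a nearby bad point
lies in `13 b` and satisfies `∫_W G ≥ (K - Θ)λ μ(W)`. A Vitali `5r`-covering of these balls bounds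
the nearby bad points by `C (δ + γ)/(K - Θ) μ(b)`, and a Vitali covering by the stopping balls
adds these local bounds up.
-/

theorem le_ofReal_div_mul_of_ofReal_mul_le {a c : ℝ} (ha : 0 < a) {x y : ℝ≥0∞}
    (h : ENNReal.ofReal a * x ≤ ENNReal.ofReal c * y) : x ≤ ENNReal.ofReal (c / a) * y := by
  rw [ENNReal.ofReal_div_of_pos ha, div_eq_mul_inv, mul_right_comm, ← div_eq_mul_inv,
    ENNReal.le_div_iff_mul_le (Or.inl (ENNReal.ofReal_pos.mpr ha).ne')
      (Or.inl ENNReal.ofReal_ne_top), mul_comm]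
  exact h

theorem setLIntegral_le_add_eLpNorm_mul {X : Type*} [MeasurableSpace X] {μ : Measure X}
    {s t : Set X} {F G H : X → ℝ} (h : ∀ᵐ x ∂μ.restrict s, F x ≤ G x + H x) (hts : t ⊆ s) :
    ∫⁻ x in t, ENNReal.ofReal (F x) ∂μ
      ≤ ∫⁻ x in t, ENNReal.ofReal (G x) ∂μ + eLpNorm H ⊤ (μ.restrict s) * μ t := by
  have hle : ∀ᵐ x ∂μ.restrict t,
      ENNReal.ofReal (F x) ≤ ENNReal.ofReal (G x) + eLpNorm H ⊤ (μ.restrict s) := by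
    refine ae_restrict_of_ae_restrict_of_subset hts ?_
    filter_upwards [h, ae_le_eLpNormEssSup (f := H) (μ := μ.restrict s)] with x hFGH hH
    calc ENNReal.ofReal (F x) ≤ ENNReal.ofReal (G x + H x) := ENNReal.ofReal_le_ofReal hFGH
      _ ≤ ENNReal.ofReal (G x) + ENNReal.ofReal (H x) := ENNReal.ofReal_add_le
      _ ≤ _ := by
          rw [eLpNorm_exponent_top]
          gcongr
          exact (Real.ofReal_le_enorm _).trans hH
  calc _ ≤ ∫⁻ x in t, ENNReal.ofReal (G x) + eLpNorm H ⊤ (μ.restrict s) ∂μ := lintegral_mono_ae hle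
    _ = _ := by rw [lintegral_add_right _ measurable_const, setLIntegral_const]

namespace MBall

variable {X : Type*}

@[simp]
theorem dilate_center (B : MBall X) {t : ℝ} (ht : 0 < t) : (B.dilate t ht).center = B.center :=
  rfl

@[simp]
theorem dilate_radius (B : MBall X) {t : ℝ} (ht : 0 < t) :
    (B.dilate t ht).radius = t * B.radius :=
  rfl

variable [MetricSpace X]

theorem set_nonempty (B : MBall X) : B.set.Nonempty :=
  ⟨B.center, Metric.mem_ball_self B.radius_pos⟩

theorem set_subset_dilate (B : MBall X) {t : ℝ} (ht0 : 0 < t) (ht : 1 ≤ t) :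
    B.set ⊆ (B.dilate t ht0).set :=
  Metric.ball_subset_ball (by simp only [dilate_radius]; nlinarith [B.radius_pos])

theorem set_subset_dilate_five {B B' : MBall X} (h : (B.set ∩ B'.set).Nonempty)
    (hr : B.radius ≤ 2 * B'.radius) : B.set ⊆ (B'.dilate 5 (by norm_num)).set :=
  Metric.ball_subset_ball' (by
    have := Metric.dist_lt_add_of_nonempty_ball_inter_ball h
    simp only [dilate_center, dilate_radius]
    linarith)

theorem set_subset_hat {B₀ B : MBall X} {η : ℝ} (hη : 0 < η) (hB : B ∈ fam B₀ η) :
    B.set ⊆ (B₀.hat η hη).set :=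
  Metric.ball_subset_ball' (by
    have : dist B.center B₀.center < B₀.radius := hB.1
    simp only [hat, dilate_center, dilate_radius]
    linarith [hB.2])

theorem radius_le_hat {B₀ B : MBall X} {η : ℝ} (hη : 0 < η) (hB : B ∈ fam B₀ η) :
    B.radius ≤ (B₀.hat η hη).radius := by
  simp only [hat, dilate_radius]
  linarith [hB.2, B₀.radius_pos]

theorem le_gstar {B₀ B : MBall X} {η : ℝ} {g : MBall X → ℝ} {x : X} (hB : B ∈ fam B₀ η)
    (hx : x ∈ B.set) : ENNReal.ofReal (g B) ≤ gstar B₀ η g x :=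
  le_iSup₂ (f := fun B (_ : B ∈ fam B₀ η ∧ x ∈ B.set) => ENNReal.ofReal (g B)) B ⟨hB, hx⟩

variable [MeasurableSpace X]

theorem measurableSet_set [OpensMeasurableSpace X] (B : MBall X) : MeasurableSet B.set :=
  Metric.isOpen_ball.measurableSet

section Maximal

variable {μ : Measure X} {B₀ B : MBall X} {η : ℝ} {f : X → ℝ} {x : X}

theorem le_maximal (hB : B ∈ fam B₀ η) (hx : x ∈ B.set) : avg μ B f ≤ maximal μ B₀ η f x :=
  le_iSup₂ (f := fun B (_ : B ∈ fam B₀ η ∧ x ∈ B.set) => avg μ B f) B ⟨hB, hx⟩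

theorem maximal_eq_zero_of_avg_hat_eq_zero (hη : 0 < η) (hfin : μ (B₀.hat η hη).set ≠ ⊤)
    (h : avg μ (B₀.hat η hη) f = 0) (x : X) : maximal μ B₀ η f x = 0 := by
  have hint : ∫⁻ y in (B₀.hat η hη).set, ENNReal.ofReal (f y) ∂μ = 0 := by
    simpa [avg, ENNReal.div_eq_zero_iff, hfin] using h
  refine nonpos_iff_eq_zero.mp (iSup₂_le fun B hB => ?_)
  have : ∫⁻ y in B.set, ENNReal.ofReal (f y) ∂μ = 0 :=
    nonpos_iff_eq_zero.mp (hint ▸ lintegral_mono_set (set_subset_hat hη hB.1))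
  simp [avg, this]

def superlevelBalls (μ : Measure X) (B₀ : MBall X) (η : ℝ) (f : X → ℝ) (a : ℝ≥0∞) (x : X) :
    Set (MBall X) :=
  {B | (B ∈ fam B₀ η ∧ x ∈ B.set) ∧ a < avg μ B f}

theorem lt_maximal_iff {a : ℝ≥0∞} :
    a < maximal μ B₀ η f x ↔ (superlevelBalls μ B₀ η f a x).Nonempty := by
  simp only [maximal, lt_iSup_iff, exists_prop]
  rfl

theorem superlevelBalls_anti {a a' : ℝ≥0∞} (h : a ≤ a') :
    superlevelBalls μ B₀ η f a' x ⊆ superlevelBalls μ B₀ η f a x :=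
  fun _ hB => ⟨hB.1, h.trans_lt hB.2⟩

/-- The supremum of the radii of `superlevelBalls` need not be attained, hence the factor `2`. -/
def IsStoppingBall (μ : Measure X) (B₀ : MBall X) (η : ℝ) (f : X → ℝ) (a : ℝ≥0∞) (x : X)
    (b : MBall X) : Prop :=
  b ∈ superlevelBalls μ B₀ η f a x ∧ ∀ B ∈ superlevelBalls μ B₀ η f a x, B.radius ≤ 2 * b.radius

theorem exists_isStoppingBall {a : ℝ≥0∞} (h : (superlevelBalls μ B₀ η f a x).Nonempty) :
    ∃ b, IsStoppingBall μ B₀ η f a x b := by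
  have hbdd : BddAbove (radius '' superlevelBalls μ B₀ η f a x) :=
    ⟨η * B₀.radius, by rintro _ ⟨B, hB, rfl⟩; exact hB.1.1.2⟩
  obtain ⟨B, hB⟩ := h
  have hsup : 0 < sSup (radius '' superlevelBalls μ B₀ η f a x) :=
    B.radius_pos.trans_le (le_csSup hbdd ⟨B, hB, rfl⟩)
  obtain ⟨_, ⟨b, hb, rfl⟩, hlt⟩ := exists_lt_of_lt_csSup (Set.Nonempty.image _ ⟨B, hB⟩)
    (half_lt_self hsup)
  exact ⟨b, hb, fun B' hB' => by linarith [le_csSup hbdd ⟨B', hB', rfl⟩]⟩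

theorem IsStoppingBall.avg_le {a : ℝ≥0∞} {b : MBall X} (hb : IsStoppingBall μ B₀ η f a x b)
    (hB : B ∈ fam B₀ η) (hx : x ∈ B.set) (hr : 2 * b.radius < B.radius) : avg μ B f ≤ a :=
  le_of_not_gt fun h => hr.not_ge (hb.2 B ⟨⟨hB, hx⟩, h⟩)

theorem IsStoppingBall.set_subset {a : ℝ≥0∞} {b : MBall X} (hb : IsStoppingBall μ B₀ η f a x b) :
    b.set ⊆ {y | a < maximal μ B₀ η f y} :=
  fun _ hy => hb.1.2.trans_le (le_maximal hb.1.1.1 hy)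

theorem IsStoppingBall.exists_superlevelBall_subset {a a' : ℝ≥0∞} {y : X} {b b' : MBall X}
    (hb' : IsStoppingBall μ B₀ η f a y b') (hinter : (b'.set ∩ b.set).Nonempty)
    (hr : b'.radius ≤ 2 * b.radius) (ha : a ≤ a') (hy : a' < maximal μ B₀ η f y) :
    ∃ W ∈ superlevelBalls μ B₀ η f a' y,
      W.set ⊆ (b.dilate 13 (by norm_num)).set ∧ W.radius ≤ 4 * b.radius := by
  obtain ⟨W, hW⟩ := lt_maximal_iff.mp hy
  have hWr : W.radius ≤ 4 * b.radius := by linarith [hb'.2 W (superlevelBalls_anti ha hW)]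
  refine ⟨W, hW, Metric.ball_subset_ball' ?_, hWr⟩
  have hyW : dist W.center y < W.radius := by rw [dist_comm]; exact hW.1.2
  have hyb' : dist y b'.center < b'.radius := hb'.1.1.2
  have hb'b := Metric.dist_lt_add_of_nonempty_ball_inter_ball hinter
  have := dist_triangle4 W.center y b'.center b.center
  simp only [dilate_center, dilate_radius]
  linarith

end Maximal

def IsDoubling (μ : Measure X) (cμ D : ℝ) : Prop :=
  ∀ B B' : MBall X, B.set ⊆ B'.set → B.radius ≤ B'.radius →
    μ B'.set ≤ ENNReal.ofReal (cμ * (B'.radius / B.radius) ^ D) * μ B.set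

section Doubling

variable {μ : Measure X} {cμ D : ℝ}

theorem IsDoubling.measure_dilate_le (hd : IsDoubling μ cμ D) (B : MBall X) {t : ℝ} (ht0 : 0 < t)
    (ht : 1 ≤ t) : μ (B.dilate t ht0).set ≤ ENNReal.ofReal (cμ * t ^ D) * μ B.set := by
  have := hd B (B.dilate t ht0) (B.set_subset_dilate ht0 ht)
    (by simp only [dilate_radius]; nlinarith [B.radius_pos])
  rwa [dilate_radius, mul_div_cancel_right₀ _ B.radius_pos.ne'] at this

theorem IsDoubling.avg_le (hd : IsDoubling μ cμ D) (hpos : ∀ B : MBall X, 0 < μ B.set)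
    (hfin : ∀ B : MBall X, μ B.set < ⊤) {B B' : MBall X} (hsub : B.set ⊆ B'.set)
    (hr : B.radius ≤ B'.radius) (f : X → ℝ) :
    avg μ B f ≤ ENNReal.ofReal (cμ * (B'.radius / B.radius) ^ D) * avg μ B' f := by
  rw [avg, ENNReal.div_le_iff (hpos B).ne' (hfin B).ne]
  calc ∫⁻ x in B.set, ENNReal.ofReal (f x) ∂μ ≤ ∫⁻ x in B'.set, ENNReal.ofReal (f x) ∂μ :=
        lintegral_mono_set hsub
    _ = avg μ B' f * μ B'.set := (ENNReal.div_mul_cancel (hpos B').ne' (hfin B').ne).symm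
    _ ≤ avg μ B' f * (ENNReal.ofReal (cμ * (B'.radius / B.radius) ^ D) * μ B.set) := by
        gcongr; exact hd B B' hsub hr
    _ = _ := by ring

theorem IsDoubling.mul_radius_lt_of_lt_avg (hd : IsDoubling μ cμ D) (hcμ : 0 ≤ cμ) (hD : 0 ≤ D)
    (hpos : ∀ B : MBall X, 0 < μ B.set) (hfin : ∀ B : MBall X, μ B.set < ⊤) {B₀ B : MBall X}
    {η : ℝ} (hη : 0 < η) (hB : B ∈ fam B₀ η) {f : X → ℝ} {s : ℝ} {a : ℝ≥0∞}
    (ha : ENNReal.ofReal (cμ * s ^ D) * avg μ (B₀.hat η hη) f ≤ a) (hlt : a < avg μ B f) :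
    s * B.radius < (B₀.hat η hη).radius := by
  by_contra! h
  have hq : (B₀.hat η hη).radius / B.radius ≤ s := (div_le_iff₀ B.radius_pos).mpr h
  refine hlt.not_ge ((hd.avg_le hpos hfin (set_subset_hat hη hB) (radius_le_hat hη hB) f).trans
    (le_trans ?_ ha))
  gcongr
  exact div_nonneg (hat B₀ η hη).radius_pos.le B.radius_pos.le

end Doubling

section Vitali

variable [OpensMeasurableSpace X] {μ : Measure X}

theorem exists_countable_disjoint_subfamily (hpos : ∀ B : MBall X, 0 < μ B.set) {ι : Type*}
    (b : ι → MBall X) (s : Set ι) {Ω : Set X} (hΩ : μ Ω ≠ ⊤) (hbΩ : ∀ i ∈ s, (b i).set ⊆ Ω)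
    {R : ℝ} (hR : ∀ i ∈ s, (b i).radius ≤ R) :
    ∃ u ⊆ s, u.Countable ∧ u.PairwiseDisjoint (fun i => (b i).set) ∧
      ∀ i ∈ s, ∃ j ∈ u, ((b i).set ∩ (b j).set).Nonempty ∧ (b i).radius ≤ 2 * (b j).radius := by
  obtain ⟨u, hus, hdisj, hcov⟩ := Vitali.exists_disjoint_subfamily_covering_enlargement
    (fun i => (b i).set) s (fun i => (b i).radius) 2 one_lt_two (fun i _ => (b i).radius_pos.le)
    R hR (fun i _ => (b i).set_nonempty)
  refine ⟨u, hus, ?_, hdisj, hcov⟩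
  have := Measure.countable_meas_pos_of_disjoint_of_meas_iUnion_ne_top μ
    (As := fun i : u => (b i).set) (fun i => (b i).measurableSet_set)
    (fun i j hij => hdisj i.2 j.2 (Subtype.coe_injective.ne hij))
    (measure_ne_top_of_subset (Set.iUnion_subset fun i => hbΩ i (hus i.2)) hΩ)
  simp only [hpos, Set.ofPred_true, Set.countable_univ_iff] at this
  exact Set.countable_coe_iff.mp this

theorem measure_le_mul_measure_biUnion (hpos : ∀ B : MBall X, 0 < μ B.set) (b : X → MBall X)
    {s Ω : Set X} (hΩ : μ Ω ≠ ⊤) (hbΩ : ∀ x ∈ s, (b x).set ⊆ Ω) {R : ℝ}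
    (hR : ∀ x ∈ s, (b x).radius ≤ R) {C : ℝ≥0∞}
    (hC : ∀ i ∈ s, μ {y ∈ s | ((b y).set ∩ (b i).set).Nonempty ∧ (b y).radius ≤ 2 * (b i).radius}
      ≤ C * μ (b i).set) :
    μ s ≤ C * μ (⋃ x ∈ s, (b x).set) := by
  obtain ⟨u, hus, hu, hdisj, hcov⟩ := exists_countable_disjoint_subfamily hpos b s hΩ hbΩ hR
  calc μ s ≤ μ (⋃ i ∈ u,
        {y ∈ s | ((b y).set ∩ (b i).set).Nonempty ∧ (b y).radius ≤ 2 * (b i).radius}) :=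
        measure_mono fun y hy => by
          obtain ⟨i, hi, h⟩ := hcov y hy
          exact Set.mem_biUnion hi ⟨hy, h⟩
    _ ≤ ∑' i : u,
        μ {y ∈ s | ((b y).set ∩ (b i).set).Nonempty ∧ (b y).radius ≤ 2 * (b i).radius} :=
        measure_biUnion_le μ hu _
    _ ≤ ∑' i : u, C * μ (b i).set := ENNReal.tsum_le_tsum fun i => hC i (hus i.2)
    _ = C * μ (⋃ i ∈ u, (b i).set) := by
        rw [ENNReal.tsum_mul_left, measure_biUnion hu hdisj fun i _ => (b i).measurableSet_set]
    _ ≤ C * μ (⋃ x ∈ s, (b x).set) := by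
        gcongr C * μ ?_; exact Set.biUnion_subset_biUnion_left hus

theorem IsDoubling.mul_measure_le_setLIntegral {cμ D : ℝ} (hd : IsDoubling μ cμ D)
    (hpos : ∀ B : MBall X, 0 < μ B.set) {S Ω : Set X} (hΩ : μ Ω ≠ ⊤) {f : X → ℝ≥0∞}
    {c : ℝ≥0∞} {R : ℝ}
    (hS : ∀ y ∈ S, ∃ W : MBall X, y ∈ W.set ∧ W.set ⊆ Ω ∧ W.radius ≤ R ∧
      c * μ W.set ≤ ∫⁻ x in W.set, f x ∂μ) :
    c * μ S ≤ ENNReal.ofReal (cμ * 5 ^ D) * ∫⁻ x in Ω, f x ∂μ := by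
  set t : Set (MBall X) :=
    {W | W.set ⊆ Ω ∧ W.radius ≤ R ∧ c * μ W.set ≤ ∫⁻ x in W.set, f x ∂μ}
  obtain ⟨u, hut, hu, hdisj, hcov⟩ :=
    exists_countable_disjoint_subfamily hpos id t hΩ (fun W hW => hW.1) (fun W hW => hW.2.1)
  simp only [id] at hdisj hcov
  have : Countable u := hu.to_subtype
  have hSu : S ⊆ ⋃ W ∈ u, (W.dilate 5 (by norm_num)).set := by
    intro y hy
    obtain ⟨W, hyW, hW⟩ := hS y hy
    obtain ⟨W', hW'u, hinter, hr⟩ := hcov W hW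
    exact Set.mem_biUnion hW'u (set_subset_dilate_five hinter hr hyW)
  calc c * μ S ≤ c * ∑' W : u, μ ((W : MBall X).dilate 5 (by norm_num)).set := by
        gcongr; exact (measure_mono hSu).trans (measure_biUnion_le μ hu _)
    _ ≤ c * ∑' W : u, ENNReal.ofReal (cμ * 5 ^ D) * μ (W : MBall X).set := by
        gcongr with W; exact hd.measure_dilate_le _ _ (by norm_num)
    _ = ENNReal.ofReal (cμ * 5 ^ D) * ∑' W : u, c * μ (W : MBall X).set := by
        rw [ENNReal.tsum_mul_left, ENNReal.tsum_mul_left]; ring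
    _ ≤ ENNReal.ofReal (cμ * 5 ^ D) * ∑' W : u, ∫⁻ x in (W : MBall X).set, f x ∂μ := by
        gcongr with W; exact (hut W.2).2.2
    _ = ENNReal.ofReal (cμ * 5 ^ D) * ∫⁻ x in ⋃ W : u, (W : MBall X).set, f x ∂μ := by
        rw [lintegral_iUnion (s := fun W : u => (W : MBall X).set) (fun W => W.1.measurableSet_set)
          (hdisj.subtype _ _)]
    _ ≤ ENNReal.ofReal (cμ * 5 ^ D) * ∫⁻ x in Ω, f x ∂μ := by
        gcongr _ * ?_
        exact lintegral_mono_set (Set.iUnion_subset fun W => (hut W.2).1)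

theorem IsDoubling.mul_measure_le_of_ae_le_add {cμ D : ℝ} (hd : IsDoubling μ cμ D)
    (hpos : ∀ B : MBall X, 0 < μ B.set) (hfin : ∀ B : MBall X, μ B.set < ⊤) {F G H : X → ℝ}
    {B : MBall X} (h : ∀ᵐ x ∂μ.restrict B.set, F x ≤ G x + H x) {k θ : ℝ≥0∞}
    (hθ : eLpNorm H ⊤ (μ.restrict B.set) ≤ θ) (hθtop : θ ≠ ⊤) {S : Set X} {R : ℝ}
    (hS : ∀ y ∈ S, ∃ W : MBall X, y ∈ W.set ∧ W.set ⊆ B.set ∧ W.radius ≤ R ∧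
      (k + θ) * μ W.set ≤ ∫⁻ x in W.set, ENNReal.ofReal (F x) ∂μ) :
    k * μ S ≤ ENNReal.ofReal (cμ * 5 ^ D) * ∫⁻ x in B.set, ENNReal.ofReal (G x) ∂μ := by
  refine hd.mul_measure_le_setLIntegral hpos (hfin B).ne (R := R) fun y hy => ?_
  obtain ⟨W, hyW, hWB, hWR, hW⟩ := hS y hy
  refine ⟨W, hyW, hWB, hWR, ?_⟩
  rw [← ENNReal.add_le_add_iff_right (ENNReal.mul_ne_top hθtop (hfin W).ne), ← add_mul]
  calc (k + θ) * μ W.set ≤ ∫⁻ x in W.set, ENNReal.ofReal (F x) ∂μ := hW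
    _ ≤ ∫⁻ x in W.set, ENNReal.ofReal (G x) ∂μ + eLpNorm H ⊤ (μ.restrict B.set) * μ W.set :=
        setLIntegral_le_add_eLpNorm_mul h hWB
    _ ≤ ∫⁻ x in W.set, ENNReal.ofReal (G x) ∂μ + θ * μ W.set := by gcongr

end Vitali

section GoodLambda

variable [OpensMeasurableSpace X] {μ : Measure X} {cμ D : ℝ} {η : ℝ} {B₀ : MBall X} {F : X → ℝ}
  {Θ : ℝ}

theorem IsDoubling.mul_measure_le_of_isStoppingBall_inter (hd : IsDoubling μ cμ D)
    (hpos : ∀ B : MBall X, 0 < μ B.set) (hfin : ∀ B : MBall X, μ B.set < ⊤) {b : MBall X}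
    {G H : X → ℝ} (h : ∀ᵐ x ∂μ.restrict (b.dilate 13 (by norm_num)).set, F x ≤ G x + H x)
    {lam K : ℝ} (hlam : 0 < lam) (hΘ : 1 ≤ Θ) (hK : Θ < K)
    (hH : eLpNorm H ⊤ (μ.restrict (b.dilate 13 (by norm_num)).set) ≤ ENNReal.ofReal (Θ * lam))
    {S : Set X} (hS : ∀ y ∈ S, ∃ b', IsStoppingBall μ B₀ η F (ENNReal.ofReal lam) y b' ∧
      (b'.set ∩ b.set).Nonempty ∧ b'.radius ≤ 2 * b.radius ∧
      ENNReal.ofReal (K * lam) < maximal μ B₀ η F y) :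
    ENNReal.ofReal ((K - Θ) * lam) * μ S ≤ ENNReal.ofReal (cμ * 5 ^ D) *
      ∫⁻ x in (b.dilate 13 (by norm_num)).set, ENNReal.ofReal (G x) ∂μ := by
  refine hd.mul_measure_le_of_ae_le_add hpos hfin h hH ENNReal.ofReal_ne_top
    (R := 4 * b.radius) fun y hy => ?_
  obtain ⟨b', hb', hinter, hr', hy⟩ := hS y hy
  obtain ⟨W, hWK, hWb, hWr⟩ := hb'.exists_superlevelBall_subset hinter hr'
    (ENNReal.ofReal_le_ofReal (by nlinarith)) hy
  refine ⟨W, hWK.1.2, hWb, hWr, ?_⟩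
  rw [← ENNReal.ofReal_add (by nlinarith) (by nlinarith), sub_mul, sub_add_cancel,
    ← ENNReal.le_div_iff_mul_le (Or.inl (hpos W).ne') (Or.inl (hfin W).ne)]
  exact hWK.2.le

theorem measure_le_of_isStoppingBall (hd : IsDoubling μ cμ D) (hcμ : 0 ≤ cμ)
    (hpos : ∀ B : MBall X, 0 < μ B.set) (hfin : ∀ B : MBall X, μ B.set < ⊤)
    {δ τ : ℝ} (hΘ : 1 ≤ Θ) (hδ : 0 ≤ δ) (hτ : 1 ≤ τ) {H G : MBall X → X → ℝ} {g : MBall X → ℝ}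
    (h1 : ∀ B ∈ fam B₀ η, ∀ᵐ x ∂(μ.restrict B.set), F x ≤ G B x + H B x)
    (h2 : ∀ B ∈ fam B₀ η, eLpNorm (H B) ⊤ (μ.restrict B.set)
      ≤ ENNReal.ofReal Θ * avg μ (B.dilate τ (zero_lt_one.trans_le hτ)) F)
    (h3 : ∀ B ∈ fam B₀ η, avg μ B (G B)
      ≤ ENNReal.ofReal δ * avg μ (B.dilate τ (zero_lt_one.trans_le hτ)) F + ENNReal.ofReal (g B))
    {lam K γ : ℝ} (hlam : 0 < lam) (hK : Θ < K) (hγ : 0 ≤ γ) {i : X} {b : MBall X}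
    (hb : IsStoppingBall μ B₀ η F (ENNReal.ofReal lam) i b)
    (hsize : 13 * τ * b.radius ≤ η * B₀.radius) (hgi : gstar B₀ η g i ≤ ENNReal.ofReal (γ * lam))
    {S : Set X} (hS : ∀ y ∈ S, ∃ b', IsStoppingBall μ B₀ η F (ENNReal.ofReal lam) y b' ∧
      (b'.set ∩ b.set).Nonempty ∧ b'.radius ≤ 2 * b.radius ∧
      ENNReal.ofReal (K * lam) < maximal μ B₀ η F y) :
    μ S ≤ ENNReal.ofReal (cμ ^ 2 * 65 ^ D * ((δ + γ) / (K - Θ))) * μ b.set := by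
  have hτ0 : 0 < τ := zero_lt_one.trans_le hτ
  have hr := b.radius_pos
  set b₁₃ := b.dilate 13 (by norm_num)
  have hi : i ∈ b₁₃.set := set_subset_dilate _ _ (by norm_num) hb.1.1.2
  have hb₁₃ : b₁₃ ∈ fam B₀ η := ⟨hb.1.1.1.1, by simp only [b₁₃, dilate_radius]; nlinarith⟩
  have hstop : avg μ (b₁₃.dilate τ hτ0) F ≤ ENNReal.ofReal lam :=
    hb.avg_le ⟨hb.1.1.1.1, by simp only [b₁₃, dilate_radius]; linarith⟩
      (set_subset_dilate _ hτ0 hτ hi) (by simp only [b₁₃, dilate_radius]; nlinarith)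
  have hH : eLpNorm (H b₁₃) ⊤ (μ.restrict b₁₃.set) ≤ ENNReal.ofReal (Θ * lam) := by
    rw [ENNReal.ofReal_mul (by linarith)]
    exact (h2 b₁₃ hb₁₃).trans (by gcongr)
  have hG : ∫⁻ x in b₁₃.set, ENNReal.ofReal (G b₁₃ x) ∂μ
      ≤ ENNReal.ofReal ((δ + γ) * lam) * μ b₁₃.set := by
    rw [← ENNReal.div_le_iff (hpos _).ne' (hfin _).ne, add_mul, ENNReal.ofReal_add
      (by positivity) (by positivity), ENNReal.ofReal_mul hδ]
    exact (h3 b₁₃ hb₁₃).trans (add_le_add (by gcongr) ((le_gstar hb₁₃ hi).trans hgi))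
  have hconst : cμ ^ 2 * 65 ^ D * ((δ + γ) / (K - Θ))
      = cμ * 5 ^ D * ((δ + γ) * lam) * (cμ * 13 ^ D) / ((K - Θ) * lam) := by
    rw [show (65 : ℝ) = 5 * 13 by norm_num, Real.mul_rpow (by norm_num) (by norm_num)]
    field_simp [(sub_pos.mpr hK).ne']
  rw [hconst]
  refine le_ofReal_div_mul_of_ofReal_mul_le (by nlinarith) ?_
  calc ENNReal.ofReal ((K - Θ) * lam) * μ S
      ≤ ENNReal.ofReal (cμ * 5 ^ D) * ∫⁻ x in b₁₃.set, ENNReal.ofReal (G b₁₃ x) ∂μ :=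
        hd.mul_measure_le_of_isStoppingBall_inter hpos hfin (h1 b₁₃ hb₁₃) hlam hΘ hK hH hS
    _ ≤ ENNReal.ofReal (cμ * 5 ^ D) *
        (ENNReal.ofReal ((δ + γ) * lam) * (ENNReal.ofReal (cμ * 13 ^ D) * μ b.set)) := by
        gcongr
        exact hG.trans (by gcongr; exact hd.measure_dilate_le b _ (by norm_num))
    _ = _ := by
        rw [ENNReal.ofReal_mul (p := cμ * 5 ^ D * ((δ + γ) * lam)) (by positivity),
          ENNReal.ofReal_mul (p := cμ * 5 ^ D) (by positivity)]
        ring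

end GoodLambda

end MBall

theorem good_lambda_metric_general
    {X : Type*} [MetricSpace X] [MeasurableSpace X] [BorelSpace X]
    (μ : Measure X) (cμ D : ℝ) (hcμ : 0 < cμ) (hD : 0 < D)
    (hdoubling : ∀ B B' : MBall X, B.set ⊆ B'.set → B.radius ≤ B'.radius →
      μ B'.set ≤ ENNReal.ofReal (cμ * (B'.radius / B.radius) ^ D) * μ B.set)
    (hpos : ∀ B : MBall X, 0 < μ B.set) (hfin : ∀ B : MBall X, μ B.set < ⊤)
    (η : ℝ) (hη : 0 < η) (B₀ : MBall X)
    (F : X → ℝ)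
    (Θ δ τ : ℝ) (hΘ : 1 ≤ Θ) (hδ0 : 0 ≤ δ) (hτ : 1 ≤ τ)
    (H G : MBall X → X → ℝ) (g : MBall X → ℝ)
    (h1 : ∀ B ∈ MBall.fam B₀ η,
      ∀ᵐ x ∂(μ.restrict (MBall.set B)), F x ≤ G B x + H B x)
    (h2 : ∀ B ∈ MBall.fam B₀ η,
      eLpNorm (H B) ⊤ (μ.restrict (MBall.set B))
        ≤ ENNReal.ofReal Θ *
          MBall.avg μ (MBall.dilate B τ (zero_lt_one.trans_le hτ)) F)
    (h3 : ∀ B ∈ MBall.fam B₀ η,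
      MBall.avg μ B (G B)
        ≤ ENNReal.ofReal δ *
            MBall.avg μ (MBall.dilate B τ (zero_lt_one.trans_le hτ)) F
          + ENNReal.ofReal (g B)) :
    ∃ lam₀ Cμ : ℝ, 0 < lam₀ ∧ 1 ≤ Cμ ∧
      ∀ lam K γ : ℝ,
        ENNReal.ofReal lam₀ * MBall.avg μ (B₀.hat η hη) F ≤ ENNReal.ofReal lam →
        max Θ (cμ * 3 ^ D) < K → 0 < γ → γ < 1 →
        μ {x ∈ (B₀.hat η hη).set | ENNReal.ofReal (K * lam) < MBall.maximal μ B₀ η F x ∧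
              MBall.gstar B₀ η g x ≤ ENNReal.ofReal (γ * lam)}
          ≤ ENNReal.ofReal (Cμ * ((δ + γ) / (K - Θ))) *
            μ {x ∈ (B₀.hat η hη).set | ENNReal.ofReal lam < MBall.maximal μ B₀ η F x} := by
  have hd : MBall.IsDoubling μ cμ D := hdoubling
  have hτ0 : 0 < τ := zero_lt_one.trans_le hτ
  have hlam₀ : 0 < cμ * (13 * τ * (1 + η) / η) ^ D := by positivity
  refine ⟨_, max 1 (cμ ^ 2 * 65 ^ D), hlam₀, le_max_left _ _, fun lam K γ hlam hK hγ _ => ?_⟩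
  have hKΘ : Θ < K := (le_max_left _ _).trans_lt hK
  rcases le_or_gt lam 0 with hlam0 | hlam0
  · rw [ENNReal.ofReal_of_nonpos hlam0, nonpos_iff_eq_zero, mul_eq_zero,
      ENNReal.ofReal_eq_zero] at hlam
    simp [MBall.maximal_eq_zero_of_avg_hat_eq_zero hη (hfin _).ne
      (hlam.resolve_left hlam₀.not_ge)]
  have : Nonempty (MBall X) := ⟨B₀⟩
  choose! bx hbx using fun x (hx : ENNReal.ofReal (K * lam) < MBall.maximal μ B₀ η F x) =>
    MBall.exists_isStoppingBall <| MBall.lt_maximal_iff.mp <|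
      (ENNReal.ofReal_le_ofReal (by nlinarith)).trans_lt hx
  have hsize : ∀ x, ENNReal.ofReal (K * lam) < MBall.maximal μ B₀ η F x →
      13 * τ * (bx x).radius ≤ η * B₀.radius := fun x hx => by
    have := hd.mul_radius_lt_of_lt_avg hcμ.le hD.le hpos hfin hη (hbx x hx).1.1.1 hlam
      (hbx x hx).1.2
    rw [MBall.hat, MBall.dilate_radius, div_mul_eq_mul_div, div_lt_iff₀ hη] at this
    nlinarith
  refine (MBall.measure_le_mul_measure_biUnion hpos bx (hfin _).ne
    (fun x hx => MBall.set_subset_hat hη (hbx x hx.2.1).1.1.1)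
    (fun x hx => (hbx x hx.2.1).1.1.1.2) fun i hi =>
      MBall.measure_le_of_isStoppingBall hd hcμ.le hpos hfin hΘ hδ0 hτ h1 h2 h3 hlam0 hKΘ hγ.le
        (hbx i hi.2.1) (hsize i hi.2.1) hi.2.2
        fun y hy => ⟨bx y, hbx y hy.1.2.1, hy.2.1, hy.2.2, hy.1.2.1⟩).trans ?_
  gcongr ENNReal.ofReal (?_ * _) * μ ?_
  · exact le_max_right _ _
  · exact Set.iUnion₂_subset fun x hx y hy =>
      ⟨MBall.set_subset_hat hη (hbx x hx.2.1).1.1.1 hy, (hbx x hx.2.1).set_subset hy⟩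

/-- **Good-λ inequality in spaces of homogeneous type.** -/
theorem good_lambda_metric
    {X : Type*} [MetricSpace X] [MeasurableSpace X] [BorelSpace X]
    (μ : Measure X) [μ.Regular] (cμ D : ℝ) (hcμ : 0 < cμ) (hD : 0 < D)
    (hdoubling : ∀ B B' : MBall X, B.set ⊆ B'.set → B.radius ≤ B'.radius →
      μ B'.set ≤ ENNReal.ofReal (cμ * (B'.radius / B.radius) ^ D) * μ B.set)
    (hpos : ∀ B : MBall X, 0 < μ B.set) (hfin : ∀ B : MBall X, μ B.set < ⊤)
    (η : ℝ) (hη : 0 < η) (B₀ : MBall X)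
    (F : X → ℝ) (hF : Measurable F) (hFnn : ∀ x, 0 ≤ F x)
    (hFint : IntegrableOn F (B₀.hat η hη).set μ)
    (Θ δ τ : ℝ) (hΘ : 1 ≤ Θ) (hδ0 : 0 ≤ δ) (hδ1 : δ < 1 / 2) (hτ : 1 ≤ τ)
    (H G : MBall X → X → ℝ) (g : MBall X → ℝ)
    (hHmeas : ∀ B, Measurable (H B)) (hGmeas : ∀ B, Measurable (G B))
    (hHnn : ∀ B x, 0 ≤ H B x) (hGnn : ∀ B x, 0 ≤ G B x) (hgnn : ∀ B, 0 ≤ g B)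
    (h1 : ∀ B ∈ MBall.fam B₀ η,
      ∀ᵐ x ∂(μ.restrict (MBall.set B)), F x ≤ G B x + H B x)
    (h2 : ∀ B ∈ MBall.fam B₀ η,
      eLpNorm (H B) ⊤ (μ.restrict (MBall.set B))
        ≤ ENNReal.ofReal Θ *
          MBall.avg μ (MBall.dilate B τ (zero_lt_one.trans_le hτ)) F)
    (h3 : ∀ B ∈ MBall.fam B₀ η,
      MBall.avg μ B (G B)
        ≤ ENNReal.ofReal δ *
            MBall.avg μ (MBall.dilate B τ (zero_lt_one.trans_le hτ)) F
          + ENNReal.ofReal (g B)) :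
    ∃ lam₀ Cμ : ℝ, 0 < lam₀ ∧ 1 ≤ Cμ ∧
      ∀ lam K γ : ℝ,
        ENNReal.ofReal lam₀ * MBall.avg μ (B₀.hat η hη) F ≤ ENNReal.ofReal lam →
        max Θ (cμ * 3 ^ D) < K → 0 < γ → γ < 1 →
        μ {x ∈ (B₀.hat η hη).set | ENNReal.ofReal (K * lam) < MBall.maximal μ B₀ η F x ∧
              MBall.gstar B₀ η g x ≤ ENNReal.ofReal (γ * lam)}
          ≤ ENNReal.ofReal (Cμ * ((δ + γ) / (K - Θ))) *
            μ {x ∈ (B₀.hat η hη).set | ENNReal.ofReal lam < MBall.maximal μ B₀ η F x} :=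
  good_lambda_metric_general μ cμ D hcμ hD hdoubling hpos hfin η hη B₀ F Θ δ τ hΘ hδ0 hτ H G g h1 h2
    h3
end
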